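/- arXiv:2010.12185 — 3 statements merged into one kernel-verified Lean document; each statement's English description precedes it below -/
import Mathlib

section
/- Under a balanced ranked set sample with consistent rankings and true AUC δ₀, the Mann–Whitney statistic is unbiased: E[δ̂_BRSS] = δ₀. -/
open MeasureTheory ProbabilityTheory Filter Finset Topology BoundedContinuousFunction

noncomputable section

namespace RSSAUC

/-- `φ(x,y) = 1` if `x < y` and `0` otherwise. -/
def phi (x y : ℝ) : ℝ := if x < y then 1 else 0

variable {Ω : Type*} [MeasurableSpace Ω]

/-- The CDF of a random variable `Z` under the probability measure `P`. -/
def cdfOf (P : Measure Ω) (Z : Ω → ℝ) (t : ℝ) : ℝ := (P {ω | Z ω ≤ t}).toReal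

/-- The CDF of a measure on `ℝ`. -/
def cdfM (μ : Measure ℝ) (t : ℝ) : ℝ := (μ (Set.Iic t)).toReal

/-- `P(W < Z)` for independent `W ~ μ` and `Z ~ ν`. -/
def probLT (μ ν : Measure ℝ) : ℝ := ((μ.prod ν) {p : ℝ × ℝ | p.1 < p.2}).toReal

/-- A balanced ranked set sample (BRSS) with consistent rankings: `X [i]j` (`i = 1,…,m`,
`j = 1,…,k`) and `Y [r]s` (`r = 1,…,n`, `s = 1,…,l`) are mutually independent; within the
`i`-th (resp. `r`-th) stratum the `X` (resp. `Y`) variables share a common CDF `Fi i`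
(resp. `Gr r`), and the continuous population CDFs satisfy `F = (1/m) ∑ᵢ Fi i` and
`G = (1/n) ∑ᵣ Gr r`. -/
structure IsBRSS (P : Measure Ω) (F G : ℝ → ℝ) {m n k l : ℕ}
    (Fi : Fin m → ℝ → ℝ) (Gr : Fin n → ℝ → ℝ)
    (X : Fin m → Fin k → Ω → ℝ) (Y : Fin n → Fin l → Ω → ℝ) : Prop where
  hm : 1 ≤ m
  hn : 1 ≤ n
  hk : 1 < k
  hl : 1 < l
  contF : Continuous F
  contG : Continuous G
  meas_X : ∀ i j, Measurable (X i j)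
  meas_Y : ∀ r s, Measurable (Y r s)
  indep : iIndepFun
      (Sum.elim (fun p : Fin m × Fin k => X p.1 p.2) (fun p : Fin n × Fin l => Y p.1 p.2)) P
  cdf_X : ∀ i j t, cdfOf P (X i j) t = Fi i t
  cdf_Y : ∀ r s t, cdfOf P (Y r s) t = Gr r t
  F_avg : ∀ t, F t = (∑ i, Fi i t) / m
  G_avg : ∀ t, G t = (∑ r, Gr r t) / n

/-- An unbalanced ranked set sample (URSS) with consistent rankings. -/
structure IsURSS (P : Measure Ω) (F G : ℝ → ℝ) {m n : ℕ} {k : Fin m → ℕ} {l : Fin n → ℕ}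
    (Fi : Fin m → ℝ → ℝ) (Gr : Fin n → ℝ → ℝ)
    (X : ∀ i, Fin (k i) → Ω → ℝ) (Y : ∀ r, Fin (l r) → Ω → ℝ) : Prop where
  hm : 1 ≤ m
  hn : 1 ≤ n
  hk : ∀ i, 1 < k i
  hl : ∀ r, 1 < l r
  contF : Continuous F
  contG : Continuous G
  meas_X : ∀ i j, Measurable (X i j)
  meas_Y : ∀ r s, Measurable (Y r s)
  indep : iIndepFun
      (Sum.elim (fun p : Σ i, Fin (k i) => X p.1 p.2) (fun p : Σ r, Fin (l r) => Y p.1 p.2)) P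
  cdf_X : ∀ i j t, cdfOf P (X i j) t = Fi i t
  cdf_Y : ∀ r s t, cdfOf P (Y r s) t = Gr r t
  F_avg : ∀ t, F t = (∑ i, Fi i t) / m
  G_avg : ∀ t, G t = (∑ r, Gr r t) / n

/-- Mann–Whitney statistic for BRSS data. -/
def deltaHatB {m n k l : ℕ} (X : Fin m → Fin k → Ω → ℝ) (Y : Fin n → Fin l → Ω → ℝ)
    (ω : Ω) : ℝ :=
  (∑ i, ∑ j, ∑ r, ∑ s, phi (X i j ω) (Y r s ω)) / (m * k * n * l)

/-- Estimated placement value `Û_{rs}` for BRSS data. -/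
def UhatB {m n k l : ℕ} (X : Fin m → Fin k → Ω → ℝ) (Y : Fin n → Fin l → Ω → ℝ)
    (r : Fin n) (s : Fin l) (ω : Ω) : ℝ :=
  1 - (∑ i, ∑ j, phi (X i j ω) (Y r s ω)) / (m * k)

/-- `V¹⁰(X_{[i]j})` for BRSS data. -/
def V10B {m n k l : ℕ} (X : Fin m → Fin k → Ω → ℝ) (Y : Fin n → Fin l → Ω → ℝ)
    (i : Fin m) (j : Fin k) (ω : Ω) : ℝ :=
  (∑ r, ∑ s, phi (X i j ω) (Y r s ω)) / (n * l)

/-- `V⁰¹(Y_{[r]s})` for BRSS data. -/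
def V01B {m n k l : ℕ} (X : Fin m → Fin k → Ω → ℝ) (Y : Fin n → Fin l → Ω → ℝ)
    (r : Fin n) (s : Fin l) (ω : Ω) : ℝ :=
  (∑ i, ∑ j, phi (X i j ω) (Y r s ω)) / (m * k)

/-- `(S¹⁰)²` for BRSS data. -/
def S10sqB {m n k l : ℕ} (X : Fin m → Fin k → Ω → ℝ) (Y : Fin n → Fin l → Ω → ℝ)
    (ω : Ω) : ℝ :=
  ∑ i, ∑ j, (V10B X Y i j ω - (∑ j', V10B X Y i j' ω) / k) ^ 2 / ((m : ℝ) * ((k : ℝ) - 1))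

/-- `(S⁰¹)²` for BRSS data. -/
def S01sqB {m n k l : ℕ} (X : Fin m → Fin k → Ω → ℝ) (Y : Fin n → Fin l → Ω → ℝ)
    (ω : Ω) : ℝ :=
  ∑ r, ∑ s, (V01B X Y r s ω - (∑ s', V01B X Y r s' ω) / l) ^ 2 / ((n : ℝ) * ((l : ℝ) - 1))

/-- Pooled variance estimator `S²` for BRSS data. -/
def S2B {m n k l : ℕ} (X : Fin m → Fin k → Ω → ℝ) (Y : Fin n → Fin l → Ω → ℝ)
    (ω : Ω) : ℝ :=
  ((n * l : ℝ) * S10sqB X Y ω + (m * k : ℝ) * S01sqB X Y ω) / ((m * k : ℝ) + (n * l : ℝ))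

/-- Mann–Whitney statistic for URSS data. -/
def deltaHatU {m n : ℕ} {k : Fin m → ℕ} {l : Fin n → ℕ}
    (X : ∀ i, Fin (k i) → Ω → ℝ) (Y : ∀ r, Fin (l r) → Ω → ℝ) (ω : Ω) : ℝ :=
  ∑ i, ∑ j, ∑ r, ∑ s, phi (X i j ω) (Y r s ω) / (m * k i * n * l r)

/-- Estimated placement value `Û_{rs}` for URSS data. -/
def UhatU {m n : ℕ} {k : Fin m → ℕ} {l : Fin n → ℕ}
    (X : ∀ i, Fin (k i) → Ω → ℝ) (Y : ∀ r, Fin (l r) → Ω → ℝ)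
    (r : Fin n) (s : Fin (l r)) (ω : Ω) : ℝ :=
  1 - ∑ i, ∑ j, phi (X i j ω) (Y r s ω) / (m * k i)

/-- `V¹⁰(X_{[i]j})` for URSS data. -/
def V10U {m n : ℕ} {k : Fin m → ℕ} {l : Fin n → ℕ}
    (X : ∀ i, Fin (k i) → Ω → ℝ) (Y : ∀ r, Fin (l r) → Ω → ℝ)
    (i : Fin m) (j : Fin (k i)) (ω : Ω) : ℝ :=
  ∑ r, ∑ s, phi (X i j ω) (Y r s ω) / (n * l r)

/-- `V⁰¹(Y_{[r]s})` for URSS data. -/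
def V01U {m n : ℕ} {k : Fin m → ℕ} {l : Fin n → ℕ}
    (X : ∀ i, Fin (k i) → Ω → ℝ) (Y : ∀ r, Fin (l r) → Ω → ℝ)
    (r : Fin n) (s : Fin (l r)) (ω : Ω) : ℝ :=
  ∑ i, ∑ j, phi (X i j ω) (Y r s ω) / (m * k i)

/-- `(S¹⁰)²` for URSS data. -/
def S10sqU {m n : ℕ} {k : Fin m → ℕ} {l : Fin n → ℕ}
    (X : ∀ i, Fin (k i) → Ω → ℝ) (Y : ∀ r, Fin (l r) → Ω → ℝ) (ω : Ω) : ℝ :=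
  ∑ i, ∑ j, (V10U X Y i j ω - (∑ j', V10U X Y i j' ω) / (k i)) ^ 2 /
    ((m : ℝ) * ((k i : ℝ) - 1))

/-- `(S⁰¹)²` for URSS data. -/
def S01sqU {m n : ℕ} {k : Fin m → ℕ} {l : Fin n → ℕ}
    (X : ∀ i, Fin (k i) → Ω → ℝ) (Y : ∀ r, Fin (l r) → Ω → ℝ) (ω : Ω) : ℝ :=
  ∑ r, ∑ s, (V01U X Y r s ω - (∑ s', V01U X Y r s' ω) / (l r)) ^ 2 /
    ((n : ℝ) * ((l r : ℝ) - 1))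

/-- Pooled variance estimator `S²` for URSS data, where `n_x = ∑ᵢ kᵢ` and `n_y = ∑ᵣ lᵣ`. -/
def S2U {m n : ℕ} {k : Fin m → ℕ} {l : Fin n → ℕ}
    (X : ∀ i, Fin (k i) → Ω → ℝ) (Y : ∀ r, Fin (l r) → Ω → ℝ) (ω : Ω) : ℝ :=
  ((∑ r, (l r : ℝ)) * S10sqU X Y ω + (∑ i, (k i : ℝ)) * S01sqU X Y ω) /
    ((∑ i, (k i : ℝ)) + (∑ r, (l r : ℝ)))

/-- Convergence in distribution of a sequence of real random variables on `(Ω, P)`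
to a limiting distribution `μ` on `ℝ`: integrals of every bounded continuous function
converge. -/
def TendstoInDistribution (P : Measure Ω) (Z : ℕ → Ω → ℝ) (μ : Measure ℝ) : Prop :=
  ∀ f : ℝ →ᵇ ℝ, Tendsto (fun t => ∫ ω, f (Z t ω) ∂P) atTop (𝓝 (∫ x, f x ∂μ))

/-- Convergence in probability of a sequence of real random variables to a constant. -/
def TendstoInProbability (P : Measure Ω) (Z : ℕ → Ω → ℝ) (c : ℝ) : Prop :=
  ∀ ε > 0, Tendsto (fun t => (P {ω | ε ≤ |Z t ω - c|}).toReal) atTop (𝓝 0)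

/-- `Z t = O_p(a t)`: stochastic boundedness at rate `a`. -/
def IsBigOp (P : Measure Ω) (Z : ℕ → Ω → ℝ) (a : ℕ → ℝ) : Prop :=
  ∀ ε > 0, ∃ M : ℝ, ∀ᶠ t in atTop, (P {ω | M * a t < |Z t ω|}).toReal < ε

/-- The chi-square distribution with one degree of freedom (the gamma distribution with
shape `1/2` and rate `1/2`). -/
def chiSq1 : Measure ℝ := gammaMeasure (1 / 2) (1 / 2)

/-- The standard normal distribution `N(0,1)`. -/
def stdNormal : Measure ℝ := gaussianReal 0 1


/-- `β = ∫ (1 − G(x))² dF(x)`, with `μ` the measure of the non-diseased population. -/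
def betaInt (μ : Measure ℝ) (G : ℝ → ℝ) : ℝ := ∫ x, (1 - G x) ^ 2 ∂μ

/-- `α = ∫ F(x)² dG(x)`, with `ν` the measure of the diseased population. -/
def alphaInt (ν : Measure ℝ) (F : ℝ → ℝ) : ℝ := ∫ x, F x ^ 2 ∂ν

/-- `β̄ = ∫ (1/n) ∑ᵣ (1 − G_{[r]}(x))² dF(x)`. -/
def betaBarInt {n : ℕ} (μ : Measure ℝ) (Gr : Fin n → ℝ → ℝ) : ℝ :=
  ∫ x, (∑ r, (1 - Gr r x) ^ 2) / n ∂μ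

/-- `ᾱ = ∫ (1/m) ∑ᵢ F_{[i]}(x)² dG(x)`. -/
def alphaBarInt {m : ℕ} (ν : Measure ℝ) (Fi : Fin m → ℝ → ℝ) : ℝ :=
  ∫ x, (∑ i, Fi i x ^ 2) / m ∂ν

/-- `δ̄₀² = (1/(mn)) ∑ᵢ ∑ᵣ δ̄_{ir}²` where `δ̄_{ir} = P(X_{[i]1} < Y_{[r]1})`,
given the stratum distributions `μi i` of `X_{[i]1}` and `νr r` of `Y_{[r]1}`. -/
def deltaBar0sq {m n : ℕ} (μi : Fin m → Measure ℝ) (νr : Fin n → Measure ℝ) : ℝ :=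
  (∑ i, ∑ r, probLT (μi i) (νr r) ^ 2) / (m * n)

/-- `φ₁₀(x) = (1/(nl)) ∑_{r,s} E[φ(x, Y_{[r]s})]`. -/
def phi10B (P : Measure Ω) {n l : ℕ} (Y : Fin n → Fin l → Ω → ℝ) (x : ℝ) : ℝ :=
  (∑ r, ∑ s, ∫ ω, phi x (Y r s ω) ∂P) / (n * l)

/-- `φ₀₁(y) = (1/(mk)) ∑_{i,j} E[φ(X_{[i]j}, y)]`. -/
def phi01B (P : Measure Ω) {m k : ℕ} (X : Fin m → Fin k → Ω → ℝ) (y : ℝ) : ℝ :=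
  (∑ i, ∑ j, ∫ ω, phi (X i j ω) y ∂P) / (m * k)

/-- Deterministic (data-level) estimated placement value `Û_{rs}` for balanced data. -/
def UhatD {m n k l : ℕ} (X : Fin m → Fin k → ℝ) (Y : Fin n → Fin l → ℝ)
    (r : Fin n) (s : Fin l) : ℝ :=
  1 - (∑ i, ∑ j, phi (X i j) (Y r s)) / (m * k)

/-- Deterministic (data-level) Mann–Whitney statistic for balanced data. -/
def deltaHatD {m n k l : ℕ} (X : Fin m → Fin k → ℝ) (Y : Fin n → Fin l → ℝ) : ℝ :=
  (∑ i, ∑ j, ∑ r, ∑ s, phi (X i j) (Y r s)) / (m * k * n * l)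

/-- Deterministic (data-level) estimated placement value `Û_{rs}` for unbalanced data. -/
def UhatUD {m n : ℕ} {k : Fin m → ℕ} {l : Fin n → ℕ}
    (X : ∀ i, Fin (k i) → ℝ) (Y : ∀ r, Fin (l r) → ℝ) (r : Fin n) (s : Fin (l r)) : ℝ :=
  1 - ∑ i, ∑ j, phi (X i j) (Y r s) / (m * k i)

/-- Deterministic (data-level) Mann–Whitney statistic for unbalanced data. -/
def deltaHatUD {m n : ℕ} {k : Fin m → ℕ} {l : Fin n → ℕ}
    (X : ∀ i, Fin (k i) → ℝ) (Y : ∀ r, Fin (l r) → ℝ) : ℝ :=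
  ∑ i, ∑ j, ∑ r, ∑ s, phi (X i j) (Y r s) / (m * k i * n * l r)

/-- Estimated placement value `Ŵ_{ij} = (1/(nl)) ∑_{r,s} φ(Y_{[r]s}, X_{[i]j})` of `X`
(the diseased distribution `G` as reference). -/
def WhatB {m n k l : ℕ} (X : Fin m → Fin k → Ω → ℝ) (Y : Fin n → Fin l → Ω → ℝ)
    (i : Fin m) (j : Fin k) (ω : Ω) : ℝ :=
  (∑ r, ∑ s, phi (Y r s ω) (X i j ω)) / (n * l)

open scoped ENNReal

section Helpers

lemma phi_eq_indicator (X Y : Ω → ℝ) (ω : Ω) :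
    phi (X ω) (Y ω) = Set.indicator {ω' | X ω' < Y ω'} (fun _ => (1:ℝ)) ω := by
  by_cases h : X ω < Y ω <;> simp [phi, h, Set.indicator]

lemma integrable_phi (P : Measure Ω) [IsProbabilityMeasure P] {X Y : Ω → ℝ}
    (hX : Measurable X) (hY : Measurable Y) :
    Integrable (fun ω => phi (X ω) (Y ω)) P := by
  have hA : MeasurableSet {ω | X ω < Y ω} := measurableSet_lt hX hY
  have : (fun ω => phi (X ω) (Y ω))
      = Set.indicator {ω' | X ω' < Y ω'} (fun _ => (1:ℝ)) := by
    funext ω; exact phi_eq_indicator X Y ω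
  rw [this]
  exact (integrable_const (1:ℝ)).indicator hA

lemma integral_phi_eq (P : Measure Ω) [IsProbabilityMeasure P] {X Y : Ω → ℝ}
    (hX : Measurable X) (hY : Measurable Y) (hind : IndepFun X Y P) :
    ∫ ω, phi (X ω) (Y ω) ∂P = probLT (P.map X) (P.map Y) := by
  have hmap : P.map (fun ω => (X ω, Y ω)) = (P.map X).prod (P.map Y) :=
    (indepFun_iff_map_prod_eq_prod_map_map hX.aemeasurable hY.aemeasurable).mp hind
  have hS : MeasurableSet {p : ℝ × ℝ | p.1 < p.2} :=
    measurableSet_lt measurable_fst measurable_snd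
  have hA : MeasurableSet {ω | X ω < Y ω} := measurableSet_lt hX hY
  have h1 : (fun ω => phi (X ω) (Y ω))
      = Set.indicator {ω' | X ω' < Y ω'} (fun _ => (1:ℝ)) := by
    funext ω; exact phi_eq_indicator X Y ω
  rw [h1, integral_indicator_const (1:ℝ) hA, smul_eq_mul, mul_one, probLT, ← hmap,
    Measure.map_apply (hX.prodMk hY) hS]
  rfl

lemma sum_map_eq {κ : ℕ} (P : Measure Ω) [IsProbabilityMeasure P] {M : ℕ} (hM : M ≠ 0)
    (hκ : κ ≠ 0) (Fi : Fin M → ℝ → ℝ) (X : Fin M → Fin κ → Ω → ℝ)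
    (hXm : ∀ i j, Measurable (X i j))
    (hcdf : ∀ i j t, cdfOf P (X i j) t = Fi i t)
    (μ : Measure ℝ) [IsProbabilityMeasure μ]
    (hμ : ∀ t, cdfM μ t = (∑ i, Fi i t) / M) :
    ∑ i, ∑ j, P.map (X i j) = ((M * κ : ℕ) : ℝ≥0∞) • μ := by
  haveI : ∀ i j, IsProbabilityMeasure (P.map (X i j)) :=
    fun i j => Measure.isProbabilityMeasure_map (hXm i j).aemeasurable
  haveI : IsFiniteMeasure (∑ i, ∑ j, P.map (X i j)) := by
    constructor
    simp only [Measure.finset_sum_apply, measure_univ, Finset.sum_const,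
      Finset.card_univ, Fintype.card_fin, nsmul_eq_mul, mul_one]
    finiteness
  have hFi_nonneg : ∀ i t, 0 ≤ Fi i t := by
    intro i t
    rw [← hcdf i ⟨0, Nat.pos_of_ne_zero hκ⟩ t]
    exact ENNReal.toReal_nonneg
  refine Measure.ext_of_Iic _ _ (fun t => ?_)
  have key : ∀ i j, (P.map (X i j)) (Set.Iic t) = ENNReal.ofReal (Fi i t) := by
    intro i j
    rw [Measure.map_apply (hXm i j) measurableSet_Iic]
    have h2 : X i j ⁻¹' Set.Iic t = {ω | X i j ω ≤ t} := rfl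
    rw [h2, ← ENNReal.ofReal_toReal (measure_ne_top P _), ← cdfOf, hcdf i j t]
  have hμt : μ (Set.Iic t) = ENNReal.ofReal ((∑ i, Fi i t) / M) := by
    rw [← ENNReal.ofReal_toReal (measure_ne_top μ _), ← cdfM, hμ t]
  rw [Measure.finset_sum_apply]
  simp_rw [Measure.finset_sum_apply, key, Finset.sum_const, Finset.card_univ,
    Fintype.card_fin, nsmul_eq_mul, Measure.smul_apply, smul_eq_mul, hμt]
  have h1 : ∀ x : Fin M, (κ:ℝ≥0∞) * ENNReal.ofReal (Fi x t) = ENNReal.ofReal ((κ:ℝ) * Fi x t) := by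
    intro x
    rw [ENNReal.ofReal_mul (by positivity), ENNReal.ofReal_natCast]
  simp_rw [h1]
  rw [← ENNReal.ofReal_sum_of_nonneg
    (fun i _ => mul_nonneg (by positivity) (hFi_nonneg i t)),
    ← ENNReal.ofReal_natCast (M * κ), ← ENNReal.ofReal_mul (by positivity)]
  congr 1
  have hM' : (M:ℝ) ≠ 0 := Nat.cast_ne_zero.mpr hM
  push_cast
  field_simp
  rw [← Finset.mul_sum]


lemma measurable_Ioi_measure (ν : Measure ℝ) : Measurable fun x => ν (Set.Ioi x) :=
  Antitone.measurable (fun _ _ hab => measure_mono (Set.Ioi_subset_Ioi hab))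

lemma prodS_eq (α β : Measure ℝ) [SFinite β] :
    (α.prod β) {p : ℝ × ℝ | p.1 < p.2} = ∫⁻ x, β (Set.Ioi x) ∂α := by
  rw [Measure.prod_apply (measurableSet_lt measurable_fst measurable_snd)]
  rfl

lemma sum_probLT {m n k l : ℕ}
    (μij : Fin m → Fin k → Measure ℝ) (νrs : Fin n → Fin l → Measure ℝ)
    (hμP : ∀ i j, IsProbabilityMeasure (μij i j))
    (hνP : ∀ r s, IsProbabilityMeasure (νrs r s))
    (μ ν : Measure ℝ) [IsProbabilityMeasure μ] [IsProbabilityMeasure ν]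
    (hμs : ∑ i, ∑ j, μij i j = ((m * k : ℕ) : ℝ≥0∞) • μ)
    (hνs : ∑ r, ∑ s, νrs r s = ((n * l : ℕ) : ℝ≥0∞) • ν) :
    ∑ i, ∑ j, ∑ r, ∑ s, probLT (μij i j) (νrs r s)
      = ((m : ℝ) * k * n * l) * probLT μ ν := by
  haveI := hμP; haveI := hνP
  have hg : ∀ β : Measure ℝ, Measurable fun x => β (Set.Ioi x) := measurable_Ioi_measure
  set S : Set (ℝ × ℝ) := {p : ℝ × ℝ | p.1 < p.2} with hSdef
  set e : Fin m → Fin k → Fin n → Fin l → ℝ≥0∞ :=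
    fun i j r s => (μij i j).prod (νrs r s) S with he
  have hpt : ∀ x, ∑ r, ∑ s, νrs r s (Set.Ioi x) = ((n * l : ℕ) : ℝ≥0∞) * ν (Set.Ioi x) := by
    intro x
    have h := congrArg (fun ρ : Measure ℝ => ρ (Set.Ioi x)) hνs
    simpa [Measure.finset_sum_apply, Measure.smul_apply, smul_eq_mul] using h
  have hE : ∑ i, ∑ j, ∑ r, ∑ s, e i j r s
      = ((m * k : ℕ) : ℝ≥0∞) * (((n * l : ℕ) : ℝ≥0∞) * μ.prod ν S) := by
    have step1 : ∀ i j, ∑ r, ∑ s, e i j r s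
        = ((n * l : ℕ) : ℝ≥0∞) * ∫⁻ x, ν (Set.Ioi x) ∂(μij i j) := by
      intro i j
      simp_rw [he, hSdef, prodS_eq]
      rw [← lintegral_const_mul _ (hg ν)]
      simp_rw [← hpt]
      rw [lintegral_finset_sum _ (fun r _ => Finset.measurable_sum _ (fun s _ => hg _))]
      exact Finset.sum_congr rfl fun r _ =>
        (lintegral_finset_sum _ (fun s _ => hg _)).symm
    have h5 : ∑ i, ∑ j, ∫⁻ x, ν (Set.Ioi x) ∂(μij i j)
        = ((m * k : ℕ) : ℝ≥0∞) * ∫⁻ x, ν (Set.Ioi x) ∂μ := by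
      simp_rw [← lintegral_finset_sum_measure]
      rw [hμs, lintegral_smul_measure, smul_eq_mul]
    simp_rw [step1, ← Finset.mul_sum]
    rw [h5, hSdef, prodS_eq]
    ring
  have hne : ∀ i j r s, e i j r s ≠ ⊤ := fun i j r s => measure_ne_top _ _
  have h4 : ∀ i j r, (∑ s, e i j r s) ≠ ⊤ :=
    fun i j r => ENNReal.sum_ne_top.mpr (fun s _ => hne i j r s)
  have h3 : ∀ i j, (∑ r, ∑ s, e i j r s) ≠ ⊤ :=
    fun i j => ENNReal.sum_ne_top.mpr (fun r _ => h4 i j r)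
  have h2 : ∀ i, (∑ j, ∑ r, ∑ s, e i j r s) ≠ ⊤ :=
    fun i => ENNReal.sum_ne_top.mpr (fun j _ => h3 i j)
  have hto : (∑ i, ∑ j, ∑ r, ∑ s, e i j r s).toReal
      = ∑ i, ∑ j, ∑ r, ∑ s, (e i j r s).toReal := by
    rw [ENNReal.toReal_sum (fun i _ => h2 i)]
    refine Finset.sum_congr rfl fun i _ => ?_
    rw [ENNReal.toReal_sum (fun j _ => h3 i j)]
    refine Finset.sum_congr rfl fun j _ => ?_
    rw [ENNReal.toReal_sum (fun r _ => h4 i j r)]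
    refine Finset.sum_congr rfl fun r _ => ?_
    rw [ENNReal.toReal_sum (fun s _ => hne i j r s)]
  have final := congrArg ENNReal.toReal hE
  rw [hto] at final
  rw [show (∑ i, ∑ j, ∑ r, ∑ s, probLT (μij i j) (νrs r s))
      = ∑ i, ∑ j, ∑ r, ∑ s, (e i j r s).toReal from rfl, final,
    ENNReal.toReal_mul, ENNReal.toReal_mul]
  simp only [ENNReal.toReal_natCast]
  rw [probLT]
  push_cast
  ring

end Helpers

/-- Under BRSS with consistent rankings and true AUC `δ₀`, the Mann–Whitney
statistic is unbiased: `E[δ̂_BRSS] = δ₀`. -/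
theorem brss_mann_whitney_unbiased {Ω : Type*} [MeasurableSpace Ω]
    (P : Measure Ω) [IsProbabilityMeasure P]
    (F G : ℝ → ℝ) {m n k l : ℕ} (Fi : Fin m → ℝ → ℝ) (Gr : Fin n → ℝ → ℝ)
    (μ ν : Measure ℝ) [IsProbabilityMeasure μ] [IsProbabilityMeasure ν]
    (hμ : ∀ t, cdfM μ t = F t) (hν : ∀ t, cdfM ν t = G t)
    (δ₀ : ℝ) (hδ₀ : δ₀ = probLT μ ν)
    (X : Fin m → Fin k → Ω → ℝ) (Y : Fin n → Fin l → Ω → ℝ)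
    (hRSS : IsBRSS P F G Fi Gr X Y) :
    ∫ ω, deltaHatB X Y ω ∂P = δ₀ := by
  obtain ⟨hm, hn, hk, hl, _, _, measX, measY, indep, cdfX, cdfY, Favg, Gavg⟩ := hRSS
  have hm0 : m ≠ 0 := by omega
  have hn0 : n ≠ 0 := by omega
  have hk0 : k ≠ 0 := by omega
  have hl0 : l ≠ 0 := by omega
  haveI hμP : ∀ (i : Fin m) (j : Fin k), IsProbabilityMeasure (P.map (X i j)) :=
    fun i j => Measure.isProbabilityMeasure_map (measX i j).aemeasurable
  haveI hνP : ∀ (r : Fin n) (s : Fin l), IsProbabilityMeasure (P.map (Y r s)) :=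
    fun r s => Measure.isProbabilityMeasure_map (measY r s).aemeasurable
  have hint : ∀ (i : Fin m) (j : Fin k) (r : Fin n) (s : Fin l),
      Integrable (fun ω => phi (X i j ω) (Y r s ω)) P :=
    fun i j r s => integrable_phi P (measX i j) (measY r s)
  have hInt3 : ∀ (i : Fin m) (j : Fin k) (r : Fin n),
      Integrable (fun ω => ∑ s, phi (X i j ω) (Y r s ω)) P :=
    fun i j r => integrable_finset_sum _ (fun s _ => hint i j r s)
  have hInt2 : ∀ (i : Fin m) (j : Fin k),
      Integrable (fun ω => ∑ r, ∑ s, phi (X i j ω) (Y r s ω)) P :=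
    fun i j => integrable_finset_sum _ (fun r _ => hInt3 i j r)
  have hInt1 : ∀ (i : Fin m),
      Integrable (fun ω => ∑ j, ∑ r, ∑ s, phi (X i j ω) (Y r s ω)) P :=
    fun i => integrable_finset_sum _ (fun j _ => hInt2 i j)
  have h1 : ∫ ω, deltaHatB X Y ω ∂P
      = (∑ i, ∑ j, ∑ r, ∑ s, ∫ ω, phi (X i j ω) (Y r s ω) ∂P) / (m * k * n * l : ℝ) := by
    unfold deltaHatB
    rw [integral_div]
    congr 1
    rw [integral_finset_sum _ (fun i _ => hInt1 i)]
    refine Finset.sum_congr rfl fun i _ => ?_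
    rw [integral_finset_sum _ (fun j _ => hInt2 i j)]
    refine Finset.sum_congr rfl fun j _ => ?_
    rw [integral_finset_sum _ (fun r _ => hInt3 i j r)]
    refine Finset.sum_congr rfl fun r _ => ?_
    rw [integral_finset_sum _ (fun s _ => hint i j r s)]
  have h2 : ∀ (i : Fin m) (j : Fin k) (r : Fin n) (s : Fin l),
      ∫ ω, phi (X i j ω) (Y r s ω) ∂P = probLT (P.map (X i j)) (P.map (Y r s)) := by
    intro i j r s
    refine integral_phi_eq P (measX i j) (measY r s) ?_
    exact indep.indepFun (show (Sum.inl (i, j) : (Fin m × Fin k) ⊕ (Fin n × Fin l))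
      ≠ Sum.inr (r, s) from by simp)
  have hμs : ∑ i, ∑ j, P.map (X i j) = ((m * k : ℕ) : ℝ≥0∞) • μ :=
    sum_map_eq P hm0 hk0 Fi X measX cdfX μ (fun t => by rw [hμ t, Favg t])
  have hνs : ∑ r, ∑ s, P.map (Y r s) = ((n * l : ℕ) : ℝ≥0∞) • ν :=
    sum_map_eq P hn0 hl0 Gr Y measY cdfY ν (fun t => by rw [hν t, Gavg t])
  have h3 := sum_probLT (fun i j => P.map (X i j)) (fun r s => P.map (Y r s))
    hμP hνP μ ν hμs hνs
  simp_rw [h1, h2, h3, hδ₀]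
  have hden : ((m : ℝ) * k * n * l) ≠ 0 := by
    have : (0:ℝ) < (m : ℝ) * k * n * l := by
      have h1' : (0:ℝ) < m := by exact_mod_cast Nat.pos_of_ne_zero hm0
      have h2' : (0:ℝ) < k := by exact_mod_cast Nat.pos_of_ne_zero hk0
      have h3' : (0:ℝ) < n := by exact_mod_cast Nat.pos_of_ne_zero hn0
      have h4' : (0:ℝ) < l := by exact_mod_cast Nat.pos_of_ne_zero hl0
      positivity
    exact ne_of_gt this
  field_simp
end RSSAUC
end
end

section
/- Under an unbalanced ranked set sample with consistent rankings and true AUC δ₀, the Mann–Whitney statistic is unbiased: E[δ̂_URSS] = δ₀. -/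
open MeasureTheory ProbabilityTheory Filter Finset Topology BoundedContinuousFunction

noncomputable section

namespace RSSAUC

variable {Ω : Type*} [MeasurableSpace Ω]

lemma sum_prod_apply_aux {m n : ℕ} (μs : Fin m → Measure ℝ) (νs : Fin n → Measure ℝ)
    (hμ : ∀ i, IsFiniteMeasure (μs i)) (hν : ∀ r, IsFiniteMeasure (νs r))
    {t : Set (ℝ × ℝ)} (ht : MeasurableSet t) :
    ((∑ i, μs i).prod (∑ r, νs r)) t = ∑ i, ∑ r, ((μs i).prod (νs r)) t := by
  haveI := hμ; haveI := hν
  haveI : IsFiniteMeasure (∑ r, νs r) := ⟨by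
    rw [Measure.finset_sum_apply]
    exact ENNReal.sum_lt_top.2 fun r _ => measure_lt_top _ _⟩
  rw [Measure.prod_apply ht, lintegral_finset_sum_measure]
  refine Finset.sum_congr rfl fun i _ => ?_
  rw [lintegral_congr fun x => Measure.finset_sum_apply Finset.univ νs (Prod.mk x ⁻¹' t),
    lintegral_finset_sum _ fun r _ => measurable_measure_prodMk_left ht]
  exact Finset.sum_congr rfl fun r _ => (Measure.prod_apply ht).symm

lemma smul_prod_apply_aux (c d : ENNReal) (μ ν : Measure ℝ) [SFinite ν] [SFinite (d • ν)]
    {t : Set (ℝ × ℝ)} (ht : MeasurableSet t) :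
    ((c • μ).prod (d • ν)) t = c * d * (μ.prod ν) t := by
  rw [Measure.prod_apply ht, Measure.prod_apply ht, lintegral_smul_measure]
  have : ∀ x, (d • ν) (Prod.mk x ⁻¹' t) = d * ν (Prod.mk x ⁻¹' t) := fun x => rfl
  rw [lintegral_congr this, lintegral_const_mul d (measurable_measure_prodMk_left ht)]
  ring

/-- Under URSS with consistent rankings and true AUC `δ₀`, the Mann–Whitney
statistic is unbiased: `E[δ̂_URSS] = δ₀`. -/
theorem urss_mann_whitney_unbiased {Ω : Type*} [MeasurableSpace Ω]
    (P : Measure Ω) [IsProbabilityMeasure P]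
    (F G : ℝ → ℝ) {m n : ℕ} {k : Fin m → ℕ} {l : Fin n → ℕ}
    (Fi : Fin m → ℝ → ℝ) (Gr : Fin n → ℝ → ℝ)
    (μ ν : Measure ℝ) [IsProbabilityMeasure μ] [IsProbabilityMeasure ν]
    (hμ : ∀ t, cdfM μ t = F t) (hν : ∀ t, cdfM ν t = G t)
    (δ₀ : ℝ) (hδ₀ : δ₀ = probLT μ ν)
    (X : ∀ i, Fin (k i) → Ω → ℝ) (Y : ∀ r, Fin (l r) → Ω → ℝ)
    (hRSS : IsURSS P F G Fi Gr X Y) :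
    ∫ ω, deltaHatU X Y ω ∂P = δ₀ := by
  classical
  have hmpos : 0 < m := hRSS.hm
  have hnpos : 0 < n := hRSS.hn
  have hkpos : ∀ i, 0 < k i := fun i => Nat.lt_of_lt_of_le Nat.zero_lt_one (hRSS.hk i).le
  have hlpos : ∀ r, 0 < l r := fun r => Nat.lt_of_lt_of_le Nat.zero_lt_one (hRSS.hl r).le
  set s : Set (ℝ × ℝ) := {p : ℝ × ℝ | p.1 < p.2} with hs_def
  have hs : MeasurableSet s := measurableSet_lt measurable_fst measurable_snd
  set μX : Fin m → Measure ℝ := fun i => P.map (X i ⟨0, hkpos i⟩) with hμX_def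
  set νY : Fin n → Measure ℝ := fun r => P.map (Y r ⟨0, hlpos r⟩) with hνY_def
  have hprobX : ∀ i j, IsProbabilityMeasure (P.map (X i j)) :=
    fun i j => Measure.isProbabilityMeasure_map (hRSS.meas_X i j).aemeasurable
  have hprobY : ∀ r s', IsProbabilityMeasure (P.map (Y r s')) :=
    fun r s' => Measure.isProbabilityMeasure_map (hRSS.meas_Y r s').aemeasurable
  -- CDF values of the stratum laws
  have hX_Iic : ∀ i j t, P.map (X i j) (Set.Iic t) = ENNReal.ofReal (Fi i t) := by
    intro i j t
    rw [Measure.map_apply (hRSS.meas_X i j) measurableSet_Iic, ← hRSS.cdf_X i j t, cdfOf,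
      ENNReal.ofReal_toReal (measure_ne_top _ _)]
    rfl
  have hY_Iic : ∀ r s' t, P.map (Y r s') (Set.Iic t) = ENNReal.ofReal (Gr r t) := by
    intro r s' t
    rw [Measure.map_apply (hRSS.meas_Y r s') measurableSet_Iic, ← hRSS.cdf_Y r s' t, cdfOf,
      ENNReal.ofReal_toReal (measure_ne_top _ _)]
    rfl
  have hmapX : ∀ i j, P.map (X i j) = μX i := by
    intro i j
    haveI := hprobX i j
    exact Measure.ext_of_Iic _ _ fun t => by rw [hX_Iic i j t, hμX_def, hX_Iic]
  have hmapY : ∀ r s', P.map (Y r s') = νY r := by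
    intro r s'
    haveI := hprobY r s'
    exact Measure.ext_of_Iic _ _ fun t => by rw [hY_Iic r s' t, hνY_def, hY_Iic]
  have hprobμX : ∀ i, IsProbabilityMeasure (μX i) := fun i => hprobX i _
  have hprobνY : ∀ r, IsProbabilityMeasure (νY r) := fun r => hprobY r _
  have hFi_nonneg : ∀ i t, 0 ≤ Fi i t := fun i t => by
    rw [← hRSS.cdf_X i ⟨0, hkpos i⟩ t]; exact ENNReal.toReal_nonneg
  have hGr_nonneg : ∀ r t, 0 ≤ Gr r t := fun r t => by
    rw [← hRSS.cdf_Y r ⟨0, hlpos r⟩ t]; exact ENNReal.toReal_nonneg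
  -- the population laws are the stratum averages
  have hsumX : (∑ i, μX i) = (m : ENNReal) • μ := by
    haveI : IsFiniteMeasure (∑ i, μX i) := ⟨by
      rw [Measure.finset_sum_apply]
      exact ENNReal.sum_lt_top.2 fun i _ => measure_lt_top _ _⟩
    refine Measure.ext_of_Iic _ _ fun t => ?_
    rw [Measure.finset_sum_apply]
    have h1 : ∀ i : Fin m, μX i (Set.Iic t) = ENNReal.ofReal (Fi i t) := fun i => hX_Iic i _ t
    have h2 : μ (Set.Iic t) = ENNReal.ofReal (F t) := by
      rw [← hμ t, cdfM, ENNReal.ofReal_toReal (measure_ne_top _ _)]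
    have h3 : (∑ i, Fi i t) = (m : ℝ) * F t := by
      have := hRSS.F_avg t
      field_simp at this
      linarith [this]
    calc (∑ i, μX i (Set.Iic t)) = ∑ i, ENNReal.ofReal (Fi i t) :=
          Finset.sum_congr rfl fun i _ => h1 i
      _ = ENNReal.ofReal (∑ i, Fi i t) := (ENNReal.ofReal_sum_of_nonneg fun i _ => hFi_nonneg i t).symm
      _ = ENNReal.ofReal ((m : ℝ) * F t) := by rw [h3]
      _ = (m : ENNReal) * ENNReal.ofReal (F t) := by
          rw [ENNReal.ofReal_mul (by positivity), ENNReal.ofReal_natCast]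
      _ = ((m : ENNReal) • μ) (Set.Iic t) := by rw [Measure.smul_apply, smul_eq_mul, h2]
  have hsumY : (∑ r, νY r) = (n : ENNReal) • ν := by
    haveI : IsFiniteMeasure (∑ r, νY r) := ⟨by
      rw [Measure.finset_sum_apply]
      exact ENNReal.sum_lt_top.2 fun r _ => measure_lt_top _ _⟩
    refine Measure.ext_of_Iic _ _ fun t => ?_
    rw [Measure.finset_sum_apply]
    have h2 : ν (Set.Iic t) = ENNReal.ofReal (G t) := by
      rw [← hν t, cdfM, ENNReal.ofReal_toReal (measure_ne_top _ _)]
    have h3 : (∑ r, Gr r t) = (n : ℝ) * G t := by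
      have := hRSS.G_avg t
      field_simp at this
      linarith [this]
    calc (∑ r, νY r (Set.Iic t)) = ∑ r, ENNReal.ofReal (Gr r t) :=
          Finset.sum_congr rfl fun r _ => hY_Iic r _ t
      _ = ENNReal.ofReal (∑ r, Gr r t) := (ENNReal.ofReal_sum_of_nonneg fun r _ => hGr_nonneg r t).symm
      _ = ENNReal.ofReal ((n : ℝ) * G t) := by rw [h3]
      _ = (n : ENNReal) * ENNReal.ofReal (G t) := by
          rw [ENNReal.ofReal_mul (by positivity), ENNReal.ofReal_natCast]
      _ = ((n : ENNReal) • ν) (Set.Iic t) := by rw [Measure.smul_apply, smul_eq_mul, h2]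
  -- key measure identity
  have hkey : (∑ i, ∑ r, ((μX i).prod (νY r)) s) = (m : ENNReal) * n * (μ.prod ν) s := by
    rw [← sum_prod_apply_aux μX νY (fun i => by haveI := hprobμX i; infer_instance)
      (fun r => by haveI := hprobνY r; infer_instance) hs, hsumX, hsumY]
    exact smul_prod_apply_aux _ _ _ _ hs
  -- per-term expectation
  have hterm : ∀ (i : Fin m) (j : Fin (k i)) (r : Fin n) (s' : Fin (l r)),
      ∫ ω, phi (X i j ω) (Y r s' ω) ∂P = (((μX i).prod (νY r)) s).toReal := by
    intro i j r s'
    have hXY : IndepFun (X i j) (Y r s') P :=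
      hRSS.indep.indepFun (i := Sum.inl ⟨i, j⟩) (j := Sum.inr ⟨r, s'⟩) (by simp)
    have hmap : P.map (fun ω => (X i j ω, Y r s' ω)) = (P.map (X i j)).prod (P.map (Y r s')) :=
      (indepFun_iff_map_prod_eq_prod_map_map (hRSS.meas_X i j).aemeasurable
        (hRSS.meas_Y r s').aemeasurable).mp hXY
    have h1 : (fun ω => phi (X i j ω) (Y r s' ω))
        = fun ω => s.indicator (fun _ => (1 : ℝ)) (X i j ω, Y r s' ω) := by
      funext ω
      rw [Set.indicator_apply]
      simp only [phi, hs_def, Set.mem_setOf_eq]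
    rw [h1, ← integral_map ((hRSS.meas_X i j).prodMk (hRSS.meas_Y r s')).aemeasurable
      (measurable_const.indicator hs).aestronglyMeasurable,
      hmap, hmapX i j, hmapY r s', integral_indicator_const (1 : ℝ) hs, smul_eq_mul, mul_one, measureReal_def]
  -- integrability of each summand
  have hI : ∀ (i : Fin m) (j : Fin (k i)) (r : Fin n) (s' : Fin (l r)),
      Integrable (fun ω => phi (X i j ω) (Y r s' ω) / ((m : ℝ) * k i * n * l r)) P := by
    intro i j r s'
    have hA : MeasurableSet {ω | X i j ω < Y r s' ω} :=
      measurableSet_lt (hRSS.meas_X i j) (hRSS.meas_Y r s')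
    have heq : (fun ω => phi (X i j ω) (Y r s' ω) / ((m : ℝ) * k i * n * l r))
        = Set.indicator {ω | X i j ω < Y r s' ω}
            (fun _ => 1 / ((m : ℝ) * k i * n * l r)) := by
      funext ω
      rw [Set.indicator_apply]
      simp only [phi, Set.mem_setOf_eq]
      split_ifs <;> simp
    rw [heq]
    exact (integrable_indicator_iff hA).2 (integrableOn_const (measure_ne_top _ _))
  -- split the integral
  have hsplit : ∫ ω, deltaHatU X Y ω ∂P
      = ∑ i, ∑ _j : Fin (k i), ∑ r, ∑ _s' : Fin (l r), (((μX i).prod (νY r)) s).toReal / ((m : ℝ) * k i * n * l r) := by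
    simp only [deltaHatU]
    rw [integral_finset_sum _ fun i _ => integrable_finset_sum _ fun j _ =>
      integrable_finset_sum _ fun r _ => integrable_finset_sum _ fun s' _ => hI i j r s']
    refine Finset.sum_congr rfl fun i _ => ?_
    rw [integral_finset_sum _ fun j _ => integrable_finset_sum _ fun r _ =>
      integrable_finset_sum _ fun s' _ => hI i j r s']
    refine Finset.sum_congr rfl fun j _ => ?_
    rw [integral_finset_sum _ fun r _ => integrable_finset_sum _ fun s' _ => hI i j r s']
    refine Finset.sum_congr rfl fun r _ => ?_
    rw [integral_finset_sum _ fun s' _ => hI i j r s']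
    refine Finset.sum_congr rfl fun s' _ => ?_
    rw [integral_div, hterm i j r s']
  rw [hsplit]
  -- evaluate the sums
  have hsimp : ∀ (i : Fin m) (r : Fin n),
      (∑ _j : Fin (k i), ∑ _s' : Fin (l r),
        (((μX i).prod (νY r)) s).toReal / ((m : ℝ) * k i * n * l r))
      = (((μX i).prod (νY r)) s).toReal / ((m : ℝ) * n) := by
    intro i r
    rw [Finset.sum_const, Finset.sum_const, Finset.card_univ, Fintype.card_fin,
      Finset.card_univ, Fintype.card_fin]
    have hk0 : (k i : ℝ) ≠ 0 := Nat.cast_ne_zero.2 (hkpos i).ne'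
    have hl0 : (l r : ℝ) ≠ 0 := Nat.cast_ne_zero.2 (hlpos r).ne'
    have hm0 : (m : ℝ) ≠ 0 := Nat.cast_ne_zero.2 hmpos.ne'
    have hn0 : (n : ℝ) ≠ 0 := Nat.cast_ne_zero.2 hnpos.ne'
    rw [nsmul_eq_mul, nsmul_eq_mul]
    field_simp
  have hswap : (∑ i, ∑ _j : Fin (k i), ∑ r, ∑ _s' : Fin (l r), (((μX i).prod (νY r)) s).toReal / ((m : ℝ) * k i * n * l r))
      = ∑ i, ∑ r, (((μX i).prod (νY r)) s).toReal / ((m : ℝ) * n) := by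
    refine Finset.sum_congr rfl fun i _ => ?_
    rw [Finset.sum_comm]
    exact Finset.sum_congr rfl fun r _ => hsimp i r
  rw [hswap]
  have hfin : ∀ (i : Fin m) (r : Fin n), ((μX i).prod (νY r)) s ≠ ⊤ := fun i r => by
    haveI := hprobμX i; haveI := hprobνY r
    exact measure_ne_top _ _
  have htoReal : (∑ i, ∑ r, (((μX i).prod (νY r)) s).toReal)
      = ((m : ℝ) * n) * probLT μ ν := by
    have : (∑ i, ∑ r, (((μX i).prod (νY r)) s).toReal)
        = ((∑ i, ∑ r, ((μX i).prod (νY r)) s)).toReal := by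
      rw [ENNReal.toReal_sum fun i _ => by
        rw [ne_eq, ENNReal.sum_eq_top]; push_neg; exact fun r _ => hfin i r]
      exact Finset.sum_congr rfl fun i _ => (ENNReal.toReal_sum fun r _ => hfin i r).symm
    rw [this, hkey, probLT, ENNReal.toReal_mul, ENNReal.toReal_mul, ENNReal.toReal_natCast,
      ENNReal.toReal_natCast]
  have hm0 : (m : ℝ) ≠ 0 := Nat.cast_ne_zero.2 hmpos.ne'
  have hn0 : (n : ℝ) ≠ 0 := Nat.cast_ne_zero.2 hnpos.ne'
  simp only [← Finset.sum_div]
  calc (∑ i, ∑ r, (((μX i).prod (νY r)) s).toReal) / ((m : ℝ) * n)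
      = ((m : ℝ) * n) * probLT μ ν / ((m : ℝ) * n) := by rw [htoReal]
    _ = probLT μ ν := by field_simp
    _ = δ₀ := hδ₀.symm

end RSSAUC
end
end

section
/- Under a balanced ranked set sample with consistent rankings and true AUC δ₀, the variance of the Mann–Whitney statistic satisfies Var(δ̂_BRSS) = (1/(mknl)) { nl(β − (1/m)∑_{i=1}^m (δ_{[i]}^X)²) + mk(α − (1/n)∑_{r=1}^n (δ_{[r]}^Y)²) + (δ₀ − δ̄₀² − (β̄ − δ̄₀²) − (ᾱ − δ̄₀²)) }. -/
open MeasureTheory ProbabilityTheory Filter Finset Topology BoundedContinuousFunction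
open scoped ENNReal

noncomputable section

namespace RSSAUC

variable {Ω : Type*} [MeasurableSpace Ω]

/-! ### Auxiliary lemmas for the variance computation -/

lemma phi_nonneg (x y : ℝ) : 0 ≤ phi x y := by unfold phi; split <;> norm_num

lemma phi_le_one (x y : ℝ) : phi x y ≤ 1 := by unfold phi; split <;> norm_num

lemma abs_phi_le_one (x y : ℝ) : |phi x y| ≤ 1 := by
  rw [abs_of_nonneg (phi_nonneg x y)]; exact phi_le_one x y

lemma phi_mul_self (x y : ℝ) : phi x y * phi x y = phi x y := by unfold phi; split <;> norm_num

lemma measurable_phi : Measurable (fun p : ℝ × ℝ => phi p.1 p.2) := by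
  unfold phi
  exact Measurable.ite (measurableSet_lt measurable_fst measurable_snd) measurable_const
    measurable_const

lemma integrable_bdd {α : Type*} [MeasurableSpace α] (τ : Measure α) [IsFiniteMeasure τ]
    {f : α → ℝ} (hf : Measurable f) (C : ℝ) (h : ∀ x, |f x| ≤ C) : Integrable f τ :=
  ⟨hf.aestronglyMeasurable, HasFiniteIntegral.of_bounded (C := C) (ae_of_all _ h)⟩

lemma cdfM_mono (ρ : Measure ℝ) [IsFiniteMeasure ρ] : Monotone (cdfM ρ) := fun _ _ hab =>
  ENNReal.toReal_mono (measure_ne_top _ _) (measure_mono (Set.Iic_subset_Iic.mpr hab))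

lemma cdfM_nonneg (ρ : Measure ℝ) (t : ℝ) : 0 ≤ cdfM ρ t := ENNReal.toReal_nonneg

lemma cdfM_le_one (ρ : Measure ℝ) [IsProbabilityMeasure ρ] (t : ℝ) : cdfM ρ t ≤ 1 := by
  have := ENNReal.toReal_mono ENNReal.one_ne_top (prob_le_one (μ := ρ) (s := Set.Iic t))
  simpa [cdfM] using this

lemma abs_le_one_of_Icc {a : ℝ} (h0 : 0 ≤ a) (h1 : a ≤ 1) : |a| ≤ 1 :=
  abs_le.mpr ⟨by linarith, h1⟩

lemma abs_one_sub_le_one {a : ℝ} (h0 : 0 ≤ a) (h1 : a ≤ 1) : |1 - a| ≤ 1 :=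
  abs_le.mpr ⟨by linarith, by linarith⟩

lemma abs_mul_le_one {a b : ℝ} (ha : |a| ≤ 1) (hb : |b| ≤ 1) : |a * b| ≤ 1 := by
  rw [abs_mul]; exact mul_le_one₀ ha (abs_nonneg b) hb

lemma law_eq (P : Measure Ω) [IsProbabilityMeasure P] (Z : Ω → ℝ) (hZ : Measurable Z)
    (ρ : Measure ℝ) [IsProbabilityMeasure ρ] (h : ∀ t, cdfOf P Z t = cdfM ρ t) :
    P.map Z = ρ := by
  have : IsProbabilityMeasure (P.map Z) := Measure.isProbabilityMeasure_map hZ.aemeasurable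
  refine Measure.ext_of_Iic _ _ (fun t => ?_)
  rw [Measure.map_apply hZ measurableSet_Iic]
  exact (ENNReal.toReal_eq_toReal_iff' (measure_ne_top _ _) (measure_ne_top _ _)).mp (h t)

lemma meas_Ioi_antitone (σ : Measure ℝ) : Measurable (fun x => σ (Set.Ioi x)) :=
  Antitone.measurable (fun _ _ hst => measure_mono (Set.Ioi_subset_Ioi hst))

lemma meas_Iio_monotone (σ : Measure ℝ) : Measurable (fun x => σ (Set.Iio x)) :=
  Monotone.measurable (fun _ _ hst => measure_mono (Set.Iio_subset_Iio hst))

lemma toReal_Ioi (σ : Measure ℝ) [IsProbabilityMeasure σ] (x : ℝ) :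
    (σ (Set.Ioi x)).toReal = 1 - cdfM σ x := by
  rw [← Set.compl_Iic, measure_compl measurableSet_Iic (measure_ne_top σ _), measure_univ,
    ENNReal.toReal_sub_of_le prob_le_one ENNReal.one_ne_top, ENNReal.toReal_one, cdfM]

lemma probLT_eq_integral (ρ σ : Measure ℝ) [IsProbabilityMeasure ρ] [IsProbabilityMeasure σ] :
    probLT ρ σ = ∫ x, (σ (Set.Ioi x)).toReal ∂ρ := by
  unfold probLT
  rw [Measure.prod_apply (measurableSet_lt measurable_fst measurable_snd)]
  have h1 : ∀ x : ℝ, (Prod.mk x ⁻¹' {p : ℝ × ℝ | p.1 < p.2}) = Set.Ioi x := fun x => rfl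
  simp_rw [h1]
  rw [integral_toReal ((meas_Ioi_antitone σ).aemeasurable)
    (ae_of_all _ (fun x => lt_of_le_of_lt prob_le_one (by norm_num)))]

lemma probLT_eq_integral' (ρ σ : Measure ℝ) [IsProbabilityMeasure ρ] [IsProbabilityMeasure σ] :
    probLT ρ σ = ∫ x, (1 - cdfM σ x) ∂ρ := by
  rw [probLT_eq_integral]; exact integral_congr_ae (ae_of_all _ (fun x => toReal_Ioi σ x))

lemma exp_pair (P : Measure Ω) [IsProbabilityMeasure P] {A B : Ω → ℝ}
    (hA : Measurable A) (hB : Measurable B) (hAB : IndepFun A B P)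
    {ρ σ : Measure ℝ} [IsProbabilityMeasure ρ] [IsProbabilityMeasure σ]
    (hρ : P.map A = ρ) (hσ : P.map B = σ) :
    ∫ ω, phi (A ω) (B ω) ∂P = probLT ρ σ := by
  have hmap : P.map (fun ω => (A ω, B ω)) = ρ.prod σ := by
    rw [← hρ, ← hσ]
    exact (indepFun_iff_map_prod_eq_prod_map_map hA.aemeasurable hB.aemeasurable).mp hAB
  have h1 : ∫ ω, phi (A ω) (B ω) ∂P = ∫ p : ℝ × ℝ, phi p.1 p.2 ∂(ρ.prod σ) := by
    rw [← hmap, integral_map (hA.prodMk hB).aemeasurable measurable_phi.aestronglyMeasurable]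
  have hs : MeasurableSet {p : ℝ × ℝ | p.1 < p.2} :=
    measurableSet_lt measurable_fst measurable_snd
  have h2 : ∀ p : ℝ × ℝ, phi p.1 p.2 = Set.indicator {p : ℝ × ℝ | p.1 < p.2} 1 p := by
    intro p; simp only [Set.indicator_apply, Set.mem_setOf_eq, phi, Pi.one_apply]
  rw [h1, integral_congr_ae (ae_of_all _ h2), integral_indicator_one hs, probLT]
  rfl

lemma exp_same_first (P : Measure Ω) [IsProbabilityMeasure P] {A B C : Ω → ℝ}
    (hA : Measurable A) (hB : Measurable B) (hC : Measurable C)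
    (hBC : IndepFun B C P) (hABC : IndepFun A (fun ω => (B ω, C ω)) P)
    {ρ σ1 σ2 : Measure ℝ} [IsProbabilityMeasure ρ] [IsProbabilityMeasure σ1]
    [IsProbabilityMeasure σ2]
    (hρ : P.map A = ρ) (h1 : P.map B = σ1) (h2 : P.map C = σ2) :
    ∫ ω, phi (A ω) (B ω) * phi (A ω) (C ω) ∂P
      = ∫ x, (σ1 (Set.Ioi x)).toReal * (σ2 (Set.Ioi x)).toReal ∂ρ := by
  have hmapBC : P.map (fun ω => (B ω, C ω)) = σ1.prod σ2 := by
    rw [← h1, ← h2]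
    exact (indepFun_iff_map_prod_eq_prod_map_map hB.aemeasurable hC.aemeasurable).mp hBC
  have hmap : P.map (fun ω => (A ω, (B ω, C ω))) = ρ.prod (σ1.prod σ2) := by
    rw [← hρ, ← hmapBC]
    exact (indepFun_iff_map_prod_eq_prod_map_map hA.aemeasurable
      (hB.prodMk hC).aemeasurable).mp hABC
  have hgm : Measurable (fun q : ℝ × ℝ × ℝ => phi q.1 q.2.1 * phi q.1 q.2.2) := by
    apply Measurable.mul
    · exact measurable_phi.comp (measurable_fst.prodMk (measurable_fst.comp measurable_snd))
    · exact measurable_phi.comp (measurable_fst.prodMk (measurable_snd.comp measurable_snd))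
  have hstep : ∫ ω, phi (A ω) (B ω) * phi (A ω) (C ω) ∂P
      = ∫ q : ℝ × ℝ × ℝ, phi q.1 q.2.1 * phi q.1 q.2.2 ∂(ρ.prod (σ1.prod σ2)) := by
    rw [← hmap, integral_map (hA.prodMk (hB.prodMk hC)).aemeasurable
      hgm.aestronglyMeasurable]
  set T : Set (ℝ × ℝ × ℝ) := {q | q.1 < q.2.1 ∧ q.1 < q.2.2} with hT
  have hTm : MeasurableSet T :=
    (measurableSet_lt measurable_fst (measurable_fst.comp measurable_snd)).inter
      (measurableSet_lt measurable_fst (measurable_snd.comp measurable_snd))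
  have hind : ∀ q : ℝ × ℝ × ℝ, phi q.1 q.2.1 * phi q.1 q.2.2 = T.indicator 1 q := by
    intro q
    simp only [Set.indicator_apply, Set.mem_setOf_eq, phi, Pi.one_apply, hT]
    by_cases hb : q.1 < q.2.1 <;> by_cases hc : q.1 < q.2.2 <;> simp [hb, hc]
  have hmeasT : (ρ.prod (σ1.prod σ2)) T = ∫⁻ x, σ1 (Set.Ioi x) * σ2 (Set.Ioi x) ∂ρ := by
    rw [Measure.prod_apply hTm]
    congr 1
    ext x
    have hpre : (Prod.mk x ⁻¹' T) = Set.Ioi x ×ˢ Set.Ioi x := by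
      ext p; simp [hT, Set.mem_prod]
    rw [hpre, Measure.prod_prod]
  rw [hstep, integral_congr_ae (ae_of_all _ hind), integral_indicator_one hTm, measureReal_def, hmeasT,
    ← integral_toReal (f := fun x => σ1 (Set.Ioi x) * σ2 (Set.Ioi x))
      (((meas_Ioi_antitone σ1).mul (meas_Ioi_antitone σ2)).aemeasurable)
      (ae_of_all _ (fun x => lt_of_le_of_lt
        (mul_le_mul' prob_le_one prob_le_one) (by norm_num)))]
  exact integral_congr_ae (ae_of_all _ (fun x => ENNReal.toReal_mul))

lemma exp_same_second (P : Measure Ω) [IsProbabilityMeasure P] {A1 A2 B : Ω → ℝ}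
    (hA1 : Measurable A1) (hA2 : Measurable A2) (hB : Measurable B)
    (hAA : IndepFun A1 A2 P) (hABB : IndepFun B (fun ω => (A1 ω, A2 ω)) P)
    {ρ1 ρ2 σ : Measure ℝ} [IsProbabilityMeasure ρ1] [IsProbabilityMeasure ρ2]
    [IsProbabilityMeasure σ]
    (h1 : P.map A1 = ρ1) (h2 : P.map A2 = ρ2) (hσ : P.map B = σ) :
    ∫ ω, phi (A1 ω) (B ω) * phi (A2 ω) (B ω) ∂P
      = ∫ y, (ρ1 (Set.Iio y)).toReal * (ρ2 (Set.Iio y)).toReal ∂σ := by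
  have hmapAA : P.map (fun ω => (A1 ω, A2 ω)) = ρ1.prod ρ2 := by
    rw [← h1, ← h2]
    exact (indepFun_iff_map_prod_eq_prod_map_map hA1.aemeasurable hA2.aemeasurable).mp hAA
  have hmap : P.map (fun ω => (B ω, (A1 ω, A2 ω))) = σ.prod (ρ1.prod ρ2) := by
    rw [← hσ, ← hmapAA]
    exact (indepFun_iff_map_prod_eq_prod_map_map hB.aemeasurable
      (hA1.prodMk hA2).aemeasurable).mp hABB
  have hgm : Measurable (fun q : ℝ × ℝ × ℝ => phi q.2.1 q.1 * phi q.2.2 q.1) := by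
    apply Measurable.mul
    · exact measurable_phi.comp ((measurable_fst.comp measurable_snd).prodMk measurable_fst)
    · exact measurable_phi.comp ((measurable_snd.comp measurable_snd).prodMk measurable_fst)
  have hstep : ∫ ω, phi (A1 ω) (B ω) * phi (A2 ω) (B ω) ∂P
      = ∫ q : ℝ × ℝ × ℝ, phi q.2.1 q.1 * phi q.2.2 q.1 ∂(σ.prod (ρ1.prod ρ2)) := by
    rw [← hmap, integral_map (hB.prodMk (hA1.prodMk hA2)).aemeasurable
      hgm.aestronglyMeasurable]
  set T : Set (ℝ × ℝ × ℝ) := {q | q.2.1 < q.1 ∧ q.2.2 < q.1} with hT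
  have hTm : MeasurableSet T :=
    (measurableSet_lt (measurable_fst.comp measurable_snd) measurable_fst).inter
      (measurableSet_lt (measurable_snd.comp measurable_snd) measurable_fst)
  have hind : ∀ q : ℝ × ℝ × ℝ, phi q.2.1 q.1 * phi q.2.2 q.1 = T.indicator 1 q := by
    intro q
    simp only [Set.indicator_apply, Set.mem_setOf_eq, phi, Pi.one_apply, hT]
    by_cases hb : q.2.1 < q.1 <;> by_cases hc : q.2.2 < q.1 <;> simp [hb, hc]
  have hmeasT : (σ.prod (ρ1.prod ρ2)) T = ∫⁻ y, ρ1 (Set.Iio y) * ρ2 (Set.Iio y) ∂σ := by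
    rw [Measure.prod_apply hTm]
    congr 1
    ext y
    have hpre : (Prod.mk y ⁻¹' T) = Set.Iio y ×ˢ Set.Iio y := by
      ext p; simp [hT, Set.mem_prod]
    rw [hpre, Measure.prod_prod]
  rw [hstep, integral_congr_ae (ae_of_all _ hind), integral_indicator_one hTm, measureReal_def, hmeasT,
    ← integral_toReal (f := fun y => ρ1 (Set.Iio y) * ρ2 (Set.Iio y))
      (((meas_Iio_monotone ρ1).mul (meas_Iio_monotone ρ2)).aemeasurable)
      (ae_of_all _ (fun y => lt_of_le_of_lt
        (mul_le_mul' prob_le_one prob_le_one) (by norm_num)))]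
  exact integral_congr_ae (ae_of_all _ (fun y => ENNReal.toReal_mul))

lemma cont_of_squeeze {f F : ℝ → ℝ} (hF : Continuous F) (hmono : Monotone f)
    (h : ∀ a b, a ≤ b → f b - f a ≤ F b - F a) : Continuous f := by
  rw [Metric.continuous_iff]
  intro x ε hε
  obtain ⟨δ, hδ, hd⟩ := Metric.continuous_iff.mp hF x ε hε
  refine ⟨δ, hδ, fun y hy => ?_⟩
  have hFlt := hd y hy
  rw [Real.dist_eq] at hFlt ⊢
  rcases le_total x y with hxy | hxy
  · have h1 := h x y hxy
    have h2 : 0 ≤ f y - f x := sub_nonneg.mpr (hmono hxy)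
    have h3 : F y - F x ≤ |F y - F x| := le_abs_self _
    rw [abs_of_nonneg h2]; linarith
  · have h1 := h y x hxy
    have h2 : f y - f x ≤ 0 := sub_nonpos.mpr (hmono hxy)
    have h3 : F x - F y ≤ |F y - F x| := by rw [abs_sub_comm]; exact le_abs_self _
    rw [abs_of_nonpos h2]; linarith

lemma toReal_Iio_of_cont (ρ : Measure ℝ) [IsProbabilityMeasure ρ] {f : ℝ → ℝ}
    (hf : Continuous f) (hcdf : ∀ t, cdfM ρ t = f t) (y : ℝ) :
    (ρ (Set.Iio y)).toReal = f y := by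
  have hU : (⋃ n : ℕ, Set.Iic (y - ((n : ℝ) + 1)⁻¹)) = Set.Iio y := by
    ext z
    simp only [Set.mem_iUnion, Set.mem_Iic, Set.mem_Iio]
    constructor
    · rintro ⟨n, hn⟩
      have : (0:ℝ) < ((n : ℝ) + 1)⁻¹ := by positivity
      linarith
    · intro hz
      obtain ⟨n, hn⟩ := exists_nat_one_div_lt (sub_pos.mpr hz)
      rw [one_div] at hn
      exact ⟨n, by linarith⟩
  have hmono : Monotone (fun n : ℕ => Set.Iic (y - ((n : ℝ) + 1)⁻¹)) := by
    intro a b hab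
    apply Set.Iic_subset_Iic.mpr
    have h1 : ((a : ℝ) + 1) ≤ ((b : ℝ) + 1) := by
      have : (a : ℝ) ≤ (b : ℝ) := Nat.cast_le.mpr hab; linarith
    have : ((b : ℝ) + 1)⁻¹ ≤ ((a : ℝ) + 1)⁻¹ := by
      apply inv_anti₀ (by positivity) h1
    linarith
  have ht := tendsto_measure_iUnion_atTop (μ := ρ) hmono
  rw [hU] at ht
  have ht2 : Tendsto (fun n : ℕ => (ρ (Set.Iic (y - ((n : ℝ) + 1)⁻¹))).toReal) atTop
      (𝓝 ((ρ (Set.Iio y)).toReal)) :=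
    (ENNReal.tendsto_toReal (measure_ne_top _ _)).comp ht
  have ht3 : Tendsto (fun n : ℕ => f (y - ((n : ℝ) + 1)⁻¹)) atTop (𝓝 (f y)) := by
    apply (hf.tendsto y).comp
    have h0 : Tendsto (fun n : ℕ => ((n : ℝ) + 1)⁻¹) atTop (𝓝 0) := by
      simpa using tendsto_one_div_add_atTop_nhds_zero_nat (𝕜 := ℝ)
    simpa using tendsto_const_nhds.sub h0
  have heq : (fun n : ℕ => (ρ (Set.Iic (y - ((n : ℝ) + 1)⁻¹))).toReal)
      = fun n : ℕ => f (y - ((n : ℝ) + 1)⁻¹) := funext (fun n => hcdf _)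
  rw [heq] at ht2
  exact tendsto_nhds_unique ht2 ht3

lemma sum_ite_fst {A B : Type*} [Fintype A] [Fintype B] [DecidableEq A] (g : A → B → B → ℝ) :
    ∑ p : A × B, ∑ q : A × B, (if p.1 = q.1 then g p.1 p.2 q.2 else 0)
      = ∑ x : A, ∑ y : B, ∑ y' : B, g x y y' := by
  simp_rw [Fintype.sum_prod_type, Finset.sum_ite_irrel, Finset.sum_const_zero,
    Finset.sum_ite_eq, Finset.mem_univ, if_pos]

lemma sum_ite_snd {A B : Type*} [Fintype A] [Fintype B] [DecidableEq B] (g : B → A → A → ℝ) :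
    ∑ p : A × B, ∑ q : A × B, (if p.2 = q.2 then g p.2 p.1 q.1 else 0)
      = ∑ y : B, ∑ x : A, ∑ x' : A, g y x x' := by
  simp_rw [Fintype.sum_prod_type, Finset.sum_ite_eq, Finset.mem_univ, if_pos]
  rw [Finset.sum_comm]

lemma sum_ite_diag {C : Type*} [Fintype C] [DecidableEq C] (g : C → ℝ) :
    ∑ p : C, ∑ q : C, (if p = q then g p else 0) = ∑ p, g p := by
  simp_rw [Finset.sum_ite_eq, Finset.mem_univ, if_pos]

lemma measure_avg {m : ℕ} (hm : m ≠ 0) (μ : Measure ℝ) [IsProbabilityMeasure μ]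
    (μi : Fin m → Measure ℝ) [∀ i, IsProbabilityMeasure (μi i)]
    (h : ∀ t, cdfM μ t = (∑ i, cdfM (μi i) t) / m) :
    μ = (m : ℝ≥0∞)⁻¹ • ∑ i, μi i := by
  refine Measure.ext_of_Iic _ _ (fun t => ?_)
  rw [Measure.smul_apply, Measure.finset_sum_apply, smul_eq_mul]
  have hfin : (∑ i, μi i (Set.Iic t)) ≠ ⊤ :=
    (ENNReal.sum_lt_top.mpr (fun i _ => measure_lt_top _ _)).ne
  have hminv : ((m : ℝ≥0∞))⁻¹ ≠ ⊤ := by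
    simp [ENNReal.inv_ne_top, hm]
  refine (ENNReal.toReal_eq_toReal_iff' (measure_ne_top _ _) (ENNReal.mul_ne_top hminv hfin)).mp ?_
  rw [ENNReal.toReal_mul, ENNReal.toReal_inv, ENNReal.toReal_natCast,
    ENNReal.toReal_sum (fun i _ => measure_ne_top _ _)]
  have h' := h t
  rw [cdfM] at h'
  rw [h']
  simp_rw [cdfM]
  rw [div_eq_inv_mul]

lemma integral_avg {m : ℕ} (μ : Measure ℝ) [IsProbabilityMeasure μ]
    (μi : Fin m → Measure ℝ) [∀ i, IsProbabilityMeasure (μi i)]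
    (hsum : μ = (m : ℝ≥0∞)⁻¹ • ∑ i, μi i) {f : ℝ → ℝ} (hf : Measurable f) (C : ℝ)
    (hbd : ∀ x, |f x| ≤ C) :
    ∫ x, f x ∂μ = (∑ i, ∫ x, f x ∂(μi i)) / m := by
  rw [hsum, integral_smul_measure,
    integral_finset_sum_measure (fun i _ => ⟨hf.aestronglyMeasurable,
      HasFiniteIntegral.of_bounded (C := C) (ae_of_all _ hbd)⟩)]
  rw [ENNReal.toReal_inv, ENNReal.toReal_natCast, smul_eq_mul, div_eq_inv_mul]

lemma variance_sum_eq (P : Measure Ω) [IsProbabilityMeasure P]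
    {A B : Type*} [Fintype A] [Fintype B] [DecidableEq A] [DecidableEq B]
    (e : A × B → Ω → ℝ) (hmeas : ∀ p, Measurable (e p)) (hbd : ∀ p ω, |e p ω| ≤ 1)
    (dAB : A → B → ℝ) (g1 : A → B → B → ℝ) (g2 : B → A → A → ℝ)
    (hE : ∀ p, ∫ ω, e p ω ∂P = dAB p.1 p.2)
    (hdiag : ∀ p, ∫ ω, e p ω * e p ω ∂P = dAB p.1 p.2)
    (h1 : ∀ x y y', y ≠ y' → ∫ ω, e (x, y) ω * e (x, y') ω ∂P = g1 x y y')
    (h2 : ∀ y x x', x ≠ x' → ∫ ω, e (x, y) ω * e (x', y) ω ∂P = g2 y x x')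
    (h4 : ∀ x x' y y', x ≠ x' → y ≠ y' →
      ∫ ω, e (x, y) ω * e (x', y') ω ∂P = dAB x y * dAB x' y') :
    variance (fun ω => ∑ p, e p ω) P =
      (∑ x, ∑ y, ∑ y', (g1 x y y' - dAB x y * dAB x y'))
        + (∑ y, ∑ x, ∑ x', (g2 y x x' - dAB x y * dAB x' y))
        + ∑ p : A × B, (dAB p.1 p.2 - (g1 p.1 p.2 p.2 + g2 p.2 p.1 p.1) + dAB p.1 p.2 ^ 2) := by
  classical
  have hint : ∀ p q : A × B, Integrable (fun ω => e p ω * e q ω) P := fun p q =>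
    integrable_bdd P ((hmeas p).mul (hmeas q)) 1 (fun ω => by
      rw [abs_mul]
      exact mul_le_one₀ (hbd p ω) (abs_nonneg _) (hbd q ω))
  have hSm : Measurable (fun ω => ∑ p, e p ω) := Finset.measurable_sum _ (fun p _ => hmeas p)
  have hmem : MemLp (fun ω => ∑ p, e p ω) 2 P := by
    refine memLp_of_bounded (a := -(Fintype.card (A × B) : ℝ))
      (b := (Fintype.card (A × B) : ℝ)) (ae_of_all _ (fun ω => ?_))
      hSm.aestronglyMeasurable 2
    have hb : |∑ p, e p ω| ≤ (Fintype.card (A × B) : ℝ) := by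
      calc |∑ p, e p ω| ≤ ∑ p, |e p ω| := Finset.abs_sum_le_sum_abs _ _
        _ ≤ ∑ _p : A × B, (1 : ℝ) := Finset.sum_le_sum (fun p _ => hbd p ω)
        _ = (Fintype.card (A × B) : ℝ) := by simp
    exact abs_le.mp hb
  rw [variance_eq_sub hmem]
  have hI2 : (∫ ω, ((fun ω => ∑ p, e p ω) ^ 2) ω ∂P)
      = ∑ p : A × B, ∑ q : A × B, ∫ ω, e p ω * e q ω ∂P := by
    have hsq : ∀ ω, ((fun ω => ∑ p, e p ω) ^ 2) ω = ∑ p, ∑ q, e p ω * e q ω := by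
      intro ω
      simp only [Pi.pow_apply]
      rw [pow_two, Finset.sum_mul_sum]
    rw [integral_congr_ae (ae_of_all _ hsq),
      integral_finset_sum _ (fun p _ => integrable_finset_sum _ (fun q _ => hint p q))]
    exact Finset.sum_congr rfl (fun p _ => integral_finset_sum _ (fun q _ => hint p q))
  have hI1 : (∫ ω, (∑ p, e p ω) ∂P) = ∑ p : A × B, dAB p.1 p.2 := by
    rw [integral_finset_sum _ (fun p _ => integrable_bdd P (hmeas p) 1 (hbd p))]
    exact Finset.sum_congr rfl (fun p _ => hE p)
  rw [hI2, hI1]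
  have hsum2 : (∑ p : A × B, dAB p.1 p.2) ^ 2
      = ∑ p : A × B, ∑ q : A × B, dAB p.1 p.2 * dAB q.1 q.2 := by
    rw [pow_two, Finset.sum_mul_sum]
  rw [hsum2, ← Finset.sum_sub_distrib]
  simp_rw [← Finset.sum_sub_distrib]
  have key : ∀ p q : A × B, (∫ ω, e p ω * e q ω ∂P) - dAB p.1 p.2 * dAB q.1 q.2
      = (if p.1 = q.1 then g1 p.1 p.2 q.2 - dAB p.1 p.2 * dAB p.1 q.2 else 0)
        + (if p.2 = q.2 then g2 p.2 p.1 q.1 - dAB p.1 p.2 * dAB q.1 p.2 else 0)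
        + (if p = q then dAB p.1 p.2 - (g1 p.1 p.2 p.2 + g2 p.2 p.1 p.1) + dAB p.1 p.2 ^ 2
            else 0) := by
    rintro ⟨x, y⟩ ⟨x', y'⟩
    by_cases hx : x = x' <;> by_cases hy : y = y'
    · subst hx; subst hy
      rw [hdiag ⟨x, y⟩]
      simp only [Prod.mk.injEq, and_self, if_true, eq_self_iff_true, if_pos]
      ring
    · subst hx
      rw [h1 x y y' hy]
      simp [hy]
    · subst hy
      rw [h2 y x x' hx]
      simp [hx]
    · rw [h4 x x' y y' hx hy]
      have hpq : (x, y) ≠ (x', y') := by simp [Prod.ext_iff, hx]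
      simp [hx, hy, hpq]
  simp_rw [key, Finset.sum_add_distrib]
  rw [sum_ite_fst (fun a b b' => g1 a b b' - dAB a b * dAB a b'),
    sum_ite_snd (fun b a a' => g2 b a a' - dAB a b * dAB a' b),
    sum_ite_diag (fun p : A × B => dAB p.1 p.2 - (g1 p.1 p.2 p.2 + g2 p.2 p.1 p.1)
      + dAB p.1 p.2 ^ 2)]
  rw [Finset.sum_add_distrib]


set_option maxHeartbeats 2000000

/-- Under BRSS with consistent rankings and true AUC `δ₀`, the variance of
the Mann–Whitney statistic satisfies
`Var(δ̂_BRSS) = (1/(mknl)) { nl(β − (1/m)∑ᵢ (δ_{[i]}^X)²) + mk(α − (1/n)∑ᵣ (δ_{[r]}^Y)²)`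
`+ (δ₀ − δ̄₀² − (β̄ − δ̄₀²) − (ᾱ − δ̄₀²)) }`. -/
theorem brss_mann_whitney_variance {Ω : Type*} [MeasurableSpace Ω]
    (P : Measure Ω) [IsProbabilityMeasure P]
    (F G : ℝ → ℝ) {m n k l : ℕ} (Fi : Fin m → ℝ → ℝ) (Gr : Fin n → ℝ → ℝ)
    (μ ν : Measure ℝ) [IsProbabilityMeasure μ] [IsProbabilityMeasure ν]
    (hμ : ∀ t, cdfM μ t = F t) (hν : ∀ t, cdfM ν t = G t)
    (μi : Fin m → Measure ℝ) [∀ i, IsProbabilityMeasure (μi i)]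
    (hμi : ∀ i t, cdfM (μi i) t = Fi i t)
    (νr : Fin n → Measure ℝ) [∀ r, IsProbabilityMeasure (νr r)]
    (hνr : ∀ r t, cdfM (νr r) t = Gr r t)
    (δ₀ : ℝ) (hδ₀ : δ₀ = probLT μ ν)
    (X : Fin m → Fin k → Ω → ℝ) (Y : Fin n → Fin l → Ω → ℝ)
    (hRSS : IsBRSS P F G Fi Gr X Y) :
    variance (deltaHatB X Y) P =
      (1 / ((m : ℝ) * (k : ℝ) * (n : ℝ) * (l : ℝ))) *
        (((n : ℝ) * (l : ℝ)) * (betaInt μ G - (∑ i, probLT (μi i) ν ^ 2) / m) +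
         ((m : ℝ) * (k : ℝ)) * (alphaInt ν F - (∑ r, probLT μ (νr r) ^ 2) / n) +
         (δ₀ - deltaBar0sq μi νr - (betaBarInt μ Gr - deltaBar0sq μi νr) -
           (alphaBarInt ν Fi - deltaBar0sq μi νr))) := by
  classical
  have hm1 := hRSS.hm
  have hn1 := hRSS.hn
  have hk1 := hRSS.hk
  have hl1 := hRSS.hl
  have hm0 : (m : ℝ) ≠ 0 := Nat.cast_ne_zero.mpr (by omega)
  have hn0 : (n : ℝ) ≠ 0 := Nat.cast_ne_zero.mpr (by omega)
  have hk0 : (k : ℝ) ≠ 0 := Nat.cast_ne_zero.mpr (by omega)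
  have hl0 : (l : ℝ) ≠ 0 := Nat.cast_ne_zero.mpr (by omega)
  have hnpos : (0 : ℝ) < n := Nat.cast_pos.mpr (by omega)
  have hmpos : (0 : ℝ) < m := Nat.cast_pos.mpr (by omega)
  have hGr_mono : ∀ r, Monotone (Gr r) := fun r a b hab => by
    rw [← hνr r a, ← hνr r b]; exact cdfM_mono (νr r) hab
  have hFi_mono : ∀ i, Monotone (Fi i) := fun i a b hab => by
    rw [← hμi i a, ← hμi i b]; exact cdfM_mono (μi i) hab
  have hGr_meas : ∀ r, Measurable (Gr r) := fun r => (hGr_mono r).measurable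
  have hFi_meas : ∀ i, Measurable (Fi i) := fun i => (hFi_mono i).measurable
  have hGr_bd0 : ∀ r t, 0 ≤ Gr r t := fun r t => by rw [← hνr r t]; exact cdfM_nonneg _ _
  have hGr_bd1 : ∀ r t, Gr r t ≤ 1 := fun r t => by rw [← hνr r t]; exact cdfM_le_one _ _
  have hFi_bd0 : ∀ i t, 0 ≤ Fi i t := fun i t => by rw [← hμi i t]; exact cdfM_nonneg _ _
  have hFi_bd1 : ∀ i t, Fi i t ≤ 1 := fun i t => by rw [← hμi i t]; exact cdfM_le_one _ _
  have hG_bd0 : ∀ t, 0 ≤ G t := fun t => by rw [← hν t]; exact cdfM_nonneg _ _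
  have hG_bd1 : ∀ t, G t ≤ 1 := fun t => by rw [← hν t]; exact cdfM_le_one _ _
  have hF_bd0 : ∀ t, 0 ≤ F t := fun t => by rw [← hμ t]; exact cdfM_nonneg _ _
  have hF_bd1 : ∀ t, F t ≤ 1 := fun t => by rw [← hμ t]; exact cdfM_le_one _ _
  have hFi_cont : ∀ i, Continuous (Fi i) := by
    intro i
    apply cont_of_squeeze (F := fun t => (m : ℝ) * F t)
      (continuous_const.mul hRSS.contF) (hFi_mono i)
    intro a b hab
    have h2 : Fi i b - Fi i a ≤ ∑ j, (Fi j b - Fi j a) :=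
      Finset.single_le_sum (f := fun j => Fi j b - Fi j a)
        (fun j _ => sub_nonneg.mpr (hFi_mono j hab)) (Finset.mem_univ i)
    have hsa : ∑ j, Fi j a = (m : ℝ) * F a := by
      rw [hRSS.F_avg a]; field_simp
    have hsb : ∑ j, Fi j b = (m : ℝ) * F b := by
      rw [hRSS.F_avg b]; field_simp
    rw [Finset.sum_sub_distrib, hsa, hsb] at h2
    linarith
  have lawX : ∀ i j, P.map (X i j) = μi i := fun i j =>
    law_eq P _ (hRSS.meas_X i j) _ (fun t => (hRSS.cdf_X i j t).trans (hμi i t).symm)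
  have lawY : ∀ r s, P.map (Y r s) = νr r := fun r s =>
    law_eq P _ (hRSS.meas_Y r s) _ (fun t => (hRSS.cdf_Y r s t).trans (hνr r t).symm)
  have hIoi : ∀ (r : Fin n) (x : ℝ), ((νr r) (Set.Ioi x)).toReal = 1 - Gr r x := fun r x => by
    rw [toReal_Ioi, hνr r x]
  have hIio : ∀ (i : Fin m) (y : ℝ), ((μi i) (Set.Iio y)).toReal = Fi i y := fun i y =>
    toReal_Iio_of_cont (μi i) (hFi_cont i) (hμi i) y
  have measZ : ∀ a : (Fin m × Fin k) ⊕ (Fin n × Fin l),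
      Measurable (Sum.elim (fun p : Fin m × Fin k => X p.1 p.2)
        (fun p : Fin n × Fin l => Y p.1 p.2) a) := by
    rintro (p | p)
    · exact hRSS.meas_X p.1 p.2
    · exact hRSS.meas_Y p.1 p.2
  have hE1 : ∀ (x : Fin m × Fin k) (y : Fin n × Fin l),
      ∫ ω, phi (X x.1 x.2 ω) (Y y.1 y.2 ω) ∂P = probLT (μi x.1) (νr y.1) := fun x y =>
    exp_pair P (hRSS.meas_X _ _) (hRSS.meas_Y _ _)
      (hRSS.indep.indepFun
        (show (Sum.inl x : (Fin m × Fin k) ⊕ (Fin n × Fin l)) ≠ Sum.inr y by simp))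
      (lawX _ _) (lawY _ _)
  have hdiagE : ∀ (x : Fin m × Fin k) (y : Fin n × Fin l),
      ∫ ω, phi (X x.1 x.2 ω) (Y y.1 y.2 ω) * phi (X x.1 x.2 ω) (Y y.1 y.2 ω) ∂P
        = probLT (μi x.1) (νr y.1) := by
    intro x y
    rw [integral_congr_ae (ae_of_all _
      (fun ω => phi_mul_self (X x.1 x.2 ω) (Y y.1 y.2 ω)))]
    exact hE1 x y
  have hEvalY : ∀ (x : Fin m × Fin k) (y y' : Fin n × Fin l), y ≠ y' →
      ∫ ω, phi (X x.1 x.2 ω) (Y y.1 y.2 ω) * phi (X x.1 x.2 ω) (Y y'.1 y'.2 ω) ∂P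
        = ∫ t, (1 - Gr y.1 t) * (1 - Gr y'.1 t) ∂(μi x.1) := by
    intro x y y' hyy'
    have hne : (Sum.inr y : (Fin m × Fin k) ⊕ (Fin n × Fin l)) ≠ Sum.inr y' := by
      simp [hyy']
    have h1 : IndepFun (Y y.1 y.2) (Y y'.1 y'.2) P := hRSS.indep.indepFun hne
    have h2 : IndepFun (X x.1 x.2) (fun ω => (Y y.1 y.2 ω, Y y'.1 y'.2 ω)) P :=
      (hRSS.indep.indepFun_prodMk measZ (Sum.inr y) (Sum.inr y') (Sum.inl x)
        (by simp) (by simp)).symm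
    rw [exp_same_first P (hRSS.meas_X x.1 x.2) (hRSS.meas_Y y.1 y.2) (hRSS.meas_Y y'.1 y'.2)
      h1 h2 (lawX x.1 x.2) (lawY y.1 y.2) (lawY y'.1 y'.2)]
    exact integral_congr_ae (ae_of_all _ (fun t => by simp only [hIoi]))
  have hEvalX : ∀ (y : Fin n × Fin l) (x x' : Fin m × Fin k), x ≠ x' →
      ∫ ω, phi (X x.1 x.2 ω) (Y y.1 y.2 ω) * phi (X x'.1 x'.2 ω) (Y y.1 y.2 ω) ∂P
        = ∫ t, Fi x.1 t * Fi x'.1 t ∂(νr y.1) := by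
    intro y x x' hxx'
    have hne : (Sum.inl x : (Fin m × Fin k) ⊕ (Fin n × Fin l)) ≠ Sum.inl x' := by
      simp [hxx']
    have h1 : IndepFun (X x.1 x.2) (X x'.1 x'.2) P := hRSS.indep.indepFun hne
    have h2 : IndepFun (Y y.1 y.2) (fun ω => (X x.1 x.2 ω, X x'.1 x'.2 ω)) P :=
      (hRSS.indep.indepFun_prodMk measZ (Sum.inl x) (Sum.inl x') (Sum.inr y)
        (by simp) (by simp)).symm
    rw [exp_same_second P (hRSS.meas_X x.1 x.2) (hRSS.meas_X x'.1 x'.2) (hRSS.meas_Y y.1 y.2)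
      h1 h2 (lawX x.1 x.2) (lawX x'.1 x'.2) (lawY y.1 y.2)]
    exact integral_congr_ae (ae_of_all _ (fun t => by simp only [hIio]))
  have hEval4 : ∀ (x x' : Fin m × Fin k) (y y' : Fin n × Fin l), x ≠ x' → y ≠ y' →
      ∫ ω, phi (X x.1 x.2 ω) (Y y.1 y.2 ω) * phi (X x'.1 x'.2 ω) (Y y'.1 y'.2 ω) ∂P
        = probLT (μi x.1) (νr y.1) * probLT (μi x'.1) (νr y'.1) := by
    intro x x' y y' hx hy
    have h1 : IndepFun (fun ω => (X x.1 x.2 ω, Y y.1 y.2 ω))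
        (fun ω => (X x'.1 x'.2 ω, Y y'.1 y'.2 ω)) P :=
      hRSS.indep.indepFun_prodMk_prodMk measZ (Sum.inl x) (Sum.inr y) (Sum.inl x')
        (Sum.inr y') (by simp [hx]) (by simp) (by simp) (by simp [hy])
    have h2 : IndepFun (fun ω => phi (X x.1 x.2 ω) (Y y.1 y.2 ω))
        (fun ω => phi (X x'.1 x'.2 ω) (Y y'.1 y'.2 ω)) P :=
      h1.comp measurable_phi measurable_phi
    have h3 : ∫ ω, phi (X x.1 x.2 ω) (Y y.1 y.2 ω) * phi (X x'.1 x'.2 ω) (Y y'.1 y'.2 ω) ∂P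
        = (∫ ω, phi (X x.1 x.2 ω) (Y y.1 y.2 ω) ∂P)
          * ∫ ω, phi (X x'.1 x'.2 ω) (Y y'.1 y'.2 ω) ∂P :=
      h2.integral_mul_eq_mul_integral
        (integrable_bdd P (measurable_phi.comp ((hRSS.meas_X _ _).prodMk (hRSS.meas_Y _ _)))
          1 (fun ω => abs_phi_le_one _ _)).aestronglyMeasurable
        (integrable_bdd P (measurable_phi.comp ((hRSS.meas_X _ _).prodMk (hRSS.meas_Y _ _)))
          1 (fun ω => abs_phi_le_one _ _)).aestronglyMeasurable
    rw [h3, hE1 x y, hE1 x' y']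
  have hvarS : variance (fun ω => ∑ p : (Fin m × Fin k) × (Fin n × Fin l),
        phi (X p.1.1 p.1.2 ω) (Y p.2.1 p.2.2 ω)) P =
      (∑ x : Fin m × Fin k, ∑ y : Fin n × Fin l, ∑ y' : Fin n × Fin l,
          (∫ t, (1 - Gr y.1 t) * (1 - Gr y'.1 t) ∂(μi x.1)
            - probLT (μi x.1) (νr y.1) * probLT (μi x.1) (νr y'.1)))
        + (∑ y : Fin n × Fin l, ∑ x : Fin m × Fin k, ∑ x' : Fin m × Fin k,
            (∫ t, Fi x.1 t * Fi x'.1 t ∂(νr y.1)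
              - probLT (μi x.1) (νr y.1) * probLT (μi x'.1) (νr y.1)))
        + ∑ p : (Fin m × Fin k) × (Fin n × Fin l),
            (probLT (μi p.1.1) (νr p.2.1)
              - (∫ t, (1 - Gr p.2.1 t) * (1 - Gr p.2.1 t) ∂(μi p.1.1)
                  + ∫ t, Fi p.1.1 t * Fi p.1.1 t ∂(νr p.2.1))
              + probLT (μi p.1.1) (νr p.2.1) ^ 2) :=
    variance_sum_eq P
      (fun (p : (Fin m × Fin k) × (Fin n × Fin l)) ω =>
        phi (X p.1.1 p.1.2 ω) (Y p.2.1 p.2.2 ω))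
      (fun p => measurable_phi.comp ((hRSS.meas_X _ _).prodMk (hRSS.meas_Y _ _)))
      (fun p ω => abs_phi_le_one _ _)
      (fun x y => probLT (μi x.1) (νr y.1))
      (fun x y y' => ∫ t, (1 - Gr y.1 t) * (1 - Gr y'.1 t) ∂(μi x.1))
      (fun y x x' => ∫ t, Fi x.1 t * Fi x'.1 t ∂(νr y.1))
      (fun p => hE1 p.1 p.2) (fun p => hdiagE p.1 p.2) hEvalY hEvalX hEval4
  have hδeq : deltaHatB X Y = fun ω =>
      ((m : ℝ) * (k : ℝ) * (n : ℝ) * (l : ℝ))⁻¹ *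
        ∑ p : (Fin m × Fin k) × (Fin n × Fin l), phi (X p.1.1 p.1.2 ω) (Y p.2.1 p.2.2 ω) := by
    funext ω
    rw [deltaHatB, div_eq_inv_mul]
    congr 1
    simp [Fintype.sum_prod_type]
  rw [hδeq, variance_const_mul, hvarS]
  -- conversions for the right-hand side
  have hμavg : μ = (m : ℝ≥0∞)⁻¹ • ∑ i, μi i :=
    measure_avg (by omega) μ μi (fun t => by
      rw [hμ t, hRSS.F_avg t]
      congr 1
      exact Finset.sum_congr rfl (fun i _ => (hμi i t).symm))
  have hνavg : ν = (n : ℝ≥0∞)⁻¹ • ∑ r, νr r :=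
    measure_avg (by omega) ν νr (fun t => by
      rw [hν t, hRSS.G_avg t]
      congr 1
      exact Finset.sum_congr rfl (fun r _ => (hνr r t).symm))
  have hg1 : ∀ x : ℝ, 1 - G x = (∑ r, (1 - Gr r x)) / n := by
    intro x
    rw [hRSS.G_avg x, Finset.sum_sub_distrib, Finset.sum_const, Finset.card_univ,
      Fintype.card_fin, nsmul_eq_mul, mul_one]
    field_simp
  have habsGr : ∀ (r r' : Fin n) (t : ℝ), |(1 - Gr r t) * (1 - Gr r' t)| ≤ 1 := fun r r' t =>
    abs_mul_le_one (abs_one_sub_le_one (hGr_bd0 r t) (hGr_bd1 r t))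
      (abs_one_sub_le_one (hGr_bd0 r' t) (hGr_bd1 r' t))
  have habsFi : ∀ (i i' : Fin m) (t : ℝ), |Fi i t * Fi i' t| ≤ 1 := fun i i' t =>
    abs_mul_le_one (abs_le_one_of_Icc (hFi_bd0 i t) (hFi_bd1 i t))
      (abs_le_one_of_Icc (hFi_bd0 i' t) (hFi_bd1 i' t))
  have hintGr : ∀ (r r' : Fin n) (ρ : Measure ℝ) [IsProbabilityMeasure ρ],
      Integrable (fun t => (1 - Gr r t) * (1 - Gr r' t)) ρ := fun r r' ρ _ =>
    integrable_bdd ρ ((measurable_const.sub (hGr_meas r)).mul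
      (measurable_const.sub (hGr_meas r'))) 1 (habsGr r r')
  have hintFi : ∀ (i i' : Fin m) (ρ : Measure ℝ) [IsProbabilityMeasure ρ],
      Integrable (fun t => Fi i t * Fi i' t) ρ := fun i i' ρ _ =>
    integrable_bdd ρ ((hFi_meas i).mul (hFi_meas i')) 1 (habsFi i i')
  have hbeta : betaInt μ G
      = (∑ i, ∑ r, ∑ r', ∫ t, (1 - Gr r t) * (1 - Gr r' t) ∂(μi i))
        / ((m : ℝ) * ((n : ℝ) * (n : ℝ))) := by
    have hmeasb : Measurable (fun x => (1 - G x) ^ 2) :=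
      (measurable_const.sub hRSS.contG.measurable).pow_const 2
    have hbdb : ∀ x, |(1 - G x) ^ 2| ≤ 1 := fun x => by
      have h := abs_one_sub_le_one (hG_bd0 x) (hG_bd1 x)
      rw [abs_of_nonneg (sq_nonneg _), ← sq_abs]
      nlinarith [abs_nonneg (1 - G x)]
    have hstep1 : betaInt μ G = (∑ i, ∫ t, (1 - G t) ^ 2 ∂(μi i)) / m := by
      simp only [betaInt]
      exact integral_avg μ μi hμavg hmeasb 1 hbdb
    rw [hstep1]
    have hper : ∀ i, ∫ t, (1 - G t) ^ 2 ∂(μi i)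
        = (∑ r, ∑ r', ∫ t, (1 - Gr r t) * (1 - Gr r' t) ∂(μi i)) / ((n : ℝ) * (n : ℝ)) := by
      intro i
      have hpt : ∀ t, (1 - G t) ^ 2
          = (∑ r, ∑ r', (1 - Gr r t) * (1 - Gr r' t)) / ((n : ℝ) * (n : ℝ)) := by
        intro t
        rw [hg1 t, div_pow, pow_two (∑ r, (1 - Gr r t)), Finset.sum_mul_sum,
          pow_two ((n : ℝ))]
      rw [integral_congr_ae (ae_of_all _ hpt), integral_div,
        integral_finset_sum _ (fun r _ => integrable_finset_sum _ (fun r' _ =>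
          hintGr r r' (μi i)))]
      congr 1
      exact Finset.sum_congr rfl (fun r _ => integral_finset_sum _ (fun r' _ =>
        hintGr r r' (μi i)))
    simp_rw [hper]
    rw [← Finset.sum_div, div_div, mul_comm ((n : ℝ) * (n : ℝ)) (m : ℝ)]
  have halpha : alphaInt ν F
      = (∑ r, ∑ i, ∑ i', ∫ t, Fi i t * Fi i' t ∂(νr r))
        / ((n : ℝ) * ((m : ℝ) * (m : ℝ))) := by
    have hmeasb : Measurable (fun x => F x ^ 2) := hRSS.contF.measurable.pow_const 2
    have hbdb : ∀ x, |F x ^ 2| ≤ 1 := fun x => by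
      have h := abs_le_one_of_Icc (hF_bd0 x) (hF_bd1 x)
      rw [abs_of_nonneg (sq_nonneg _), ← sq_abs]
      nlinarith [abs_nonneg (F x)]
    have hstep1 : alphaInt ν F = (∑ r, ∫ t, F t ^ 2 ∂(νr r)) / n := by
      simp only [alphaInt]
      exact integral_avg ν νr hνavg hmeasb 1 hbdb
    rw [hstep1]
    have hper : ∀ r, ∫ t, F t ^ 2 ∂(νr r)
        = (∑ i, ∑ i', ∫ t, Fi i t * Fi i' t ∂(νr r)) / ((m : ℝ) * (m : ℝ)) := by
      intro r
      have hpt : ∀ t, F t ^ 2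
          = (∑ i, ∑ i', Fi i t * Fi i' t) / ((m : ℝ) * (m : ℝ)) := by
        intro t
        rw [hRSS.F_avg t, div_pow, pow_two (∑ i, Fi i t), Finset.sum_mul_sum,
          pow_two ((m : ℝ))]
      rw [integral_congr_ae (ae_of_all _ hpt), integral_div,
        integral_finset_sum _ (fun i _ => integrable_finset_sum _ (fun i' _ =>
          hintFi i i' (νr r)))]
      congr 1
      exact Finset.sum_congr rfl (fun i _ => integral_finset_sum _ (fun i' _ =>
        hintFi i i' (νr r)))
    simp_rw [hper]
    rw [← Finset.sum_div, div_div, mul_comm ((m : ℝ) * (m : ℝ)) (n : ℝ)]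
  have hdX : ∀ i, probLT (μi i) ν = (∑ r, probLT (μi i) (νr r)) / n := by
    intro i
    rw [probLT_eq_integral' (μi i) ν]
    have hpt : ∀ x, 1 - cdfM ν x = (∑ r, (1 - Gr r x)) / n := fun x => by
      rw [hν x]; exact hg1 x
    rw [integral_congr_ae (ae_of_all _ hpt), integral_div,
      integral_finset_sum _ (f := fun r x => 1 - Gr r x) (fun r _ => integrable_bdd _ (measurable_const.sub (hGr_meas r)) 1
        (fun t => abs_one_sub_le_one (hGr_bd0 r t) (hGr_bd1 r t)))]
    congr 1
    refine Finset.sum_congr rfl (fun r _ => ?_)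
    rw [probLT_eq_integral' (μi i) (νr r)]
    exact integral_congr_ae (ae_of_all _ (fun x => by simp only [hνr]))
  have hdY : ∀ r, probLT μ (νr r) = (∑ i, probLT (μi i) (νr r)) / m := by
    intro r
    rw [probLT_eq_integral' μ (νr r),
      integral_avg μ μi hμavg (f := fun x => 1 - cdfM (νr r) x) (measurable_const.sub (cdfM_mono (νr r)).measurable) 1
        (fun t => abs_one_sub_le_one (cdfM_nonneg _ _) (cdfM_le_one _ _))]
    congr 1
    exact Finset.sum_congr rfl (fun i _ => (probLT_eq_integral' (μi i) (νr r)).symm)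
  have hδ0v : probLT μ ν = (∑ i, (∑ r, probLT (μi i) (νr r)) / (n : ℝ)) / m := by
    rw [probLT_eq_integral' μ ν,
      integral_avg μ μi hμavg (f := fun x => 1 - cdfM ν x) (measurable_const.sub (cdfM_mono ν).measurable) 1
        (fun t => abs_one_sub_le_one (cdfM_nonneg _ _) (cdfM_le_one _ _))]
    congr 1
    refine Finset.sum_congr rfl (fun i _ => ?_)
    rw [← probLT_eq_integral' (μi i) ν, hdX i]
  have hbetaBar : betaBarInt μ Gr
      = (∑ i, ∑ r, ∫ t, (1 - Gr r t) * (1 - Gr r t) ∂(μi i)) / ((m : ℝ) * n) := by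
    simp only [betaBarInt]
    have hmeasb : Measurable (fun x => (∑ r, (1 - Gr r x) ^ 2) / (n : ℝ)) :=
      (Finset.measurable_sum _ (fun r _ =>
        (measurable_const.sub (hGr_meas r)).pow_const 2)).div_const _
    have hbdb : ∀ x, |(∑ r, (1 - Gr r x) ^ 2) / (n : ℝ)| ≤ 1 := by
      intro x
      have h1 : 0 ≤ ∑ r, (1 - Gr r x) ^ 2 :=
        Finset.sum_nonneg (fun r _ => sq_nonneg _)
      have h2 : ∑ r, (1 - Gr r x) ^ 2 ≤ (n : ℝ) := by
        calc ∑ r, (1 - Gr r x) ^ 2 ≤ ∑ _r : Fin n, (1 : ℝ) := by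
              refine Finset.sum_le_sum (fun r _ => ?_)
              have h := abs_one_sub_le_one (hGr_bd0 r x) (hGr_bd1 r x)
              nlinarith [abs_nonneg (1 - Gr r x), sq_abs (1 - Gr r x)]
          _ = (n : ℝ) := by simp
      rw [abs_of_nonneg (div_nonneg h1 (le_of_lt hnpos))]
      exact (div_le_one hnpos).mpr h2
    rw [integral_avg μ μi hμavg hmeasb 1 hbdb]
    have hper : ∀ i, ∫ x, (∑ r, (1 - Gr r x) ^ 2) / (n : ℝ) ∂(μi i)
        = (∑ r, ∫ t, (1 - Gr r t) * (1 - Gr r t) ∂(μi i)) / (n : ℝ) := by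
      intro i
      rw [integral_div, integral_finset_sum _ (f := fun r x => (1 - Gr r x) ^ 2) (fun r _ =>
        integrable_bdd _ ((measurable_const.sub (hGr_meas r)).pow_const 2) 1 (fun t => by
          have h := abs_one_sub_le_one (hGr_bd0 r t) (hGr_bd1 r t)
          rw [abs_of_nonneg (sq_nonneg _), ← sq_abs]
          nlinarith [abs_nonneg (1 - Gr r t)]))]
      congr 1
      exact Finset.sum_congr rfl (fun r _ =>
        integral_congr_ae (ae_of_all _ (fun t => pow_two _)))
    simp_rw [hper]
    rw [← Finset.sum_div, div_div, mul_comm (n : ℝ) (m : ℝ)]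
  have halphaBar : alphaBarInt ν Fi
      = (∑ i, ∑ r, ∫ t, Fi i t * Fi i t ∂(νr r)) / ((m : ℝ) * n) := by
    simp only [alphaBarInt]
    have hmeasb : Measurable (fun x => (∑ i, Fi i x ^ 2) / (m : ℝ)) :=
      (Finset.measurable_sum _ (fun i _ => (hFi_meas i).pow_const 2)).div_const _
    have hbdb : ∀ x, |(∑ i, Fi i x ^ 2) / (m : ℝ)| ≤ 1 := by
      intro x
      have h1 : 0 ≤ ∑ i, Fi i x ^ 2 := Finset.sum_nonneg (fun i _ => sq_nonneg _)
      have h2 : ∑ i, Fi i x ^ 2 ≤ (m : ℝ) := by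
        calc ∑ i, Fi i x ^ 2 ≤ ∑ _i : Fin m, (1 : ℝ) := by
              refine Finset.sum_le_sum (fun i _ => ?_)
              nlinarith [hFi_bd0 i x, hFi_bd1 i x]
          _ = (m : ℝ) := by simp
      rw [abs_of_nonneg (div_nonneg h1 (le_of_lt hmpos))]
      exact (div_le_one hmpos).mpr h2
    rw [integral_avg ν νr hνavg hmeasb 1 hbdb]
    have hper : ∀ r, ∫ x, (∑ i, Fi i x ^ 2) / (m : ℝ) ∂(νr r)
        = (∑ i, ∫ t, Fi i t * Fi i t ∂(νr r)) / (m : ℝ) := by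
      intro r
      rw [integral_div, integral_finset_sum _ (fun i _ =>
        integrable_bdd _ ((hFi_meas i).pow_const 2) 1 (fun t => by
          rw [abs_of_nonneg (sq_nonneg _)]
          nlinarith [hFi_bd0 i t, hFi_bd1 i t]))]
      congr 1
      exact Finset.sum_congr rfl (fun i _ =>
        integral_congr_ae (ae_of_all _ (fun t => pow_two _)))
    simp_rw [hper]
    rw [← Finset.sum_div, div_div, mul_comm (m : ℝ) (n : ℝ)]
    rw [Finset.sum_comm, mul_comm (n : ℝ) (m : ℝ)]
  rw [hδ₀, hδ0v, hbeta, halpha, hbetaBar, halphaBar]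
  simp only [deltaBar0sq]
  simp_rw [hdX, hdY]
  simp_rw [div_pow, pow_two, Finset.sum_mul_sum]
  simp only [Fintype.sum_prod_type, Finset.sum_const, Finset.card_univ, Fintype.card_fin,
    nsmul_eq_mul, Finset.sum_sub_distrib, Finset.sum_add_distrib]
  simp only [← Finset.mul_sum, ← Finset.sum_div]
  field_simp
  ring

end RSSAUC
end
end
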